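/- arXiv:math/0008160 — 7 statements merged into one kernel-verified Lean document; each statement's English description precedes it below -/
import Mathlib

section
/- In the Robinson–Schensted correspondence between involutions of [n] and standard Young tableaux of n cells, the subtableau on the letters 1,…,k of the tableau corresponding to an involution φ depends only on the relative order in which the letters 1,…,k appear in the value sequence of φ: if two involutions φ of [n] and ψ of [m] are such that deleting all values greater than k from the value sequences φ(1),…,φ(n) and ψ(1),…,ψ(m) yields the same word, then the subtableaux on the letters 1,…,k of their Robinson–Schensted tableaux are equal. -/
/-!
Deleting the letters `> k` commutes with Schensted insertion. Inserting a letter `x > k` only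
moves letters `> k`, since every bumped letter exceeds the one bumping it, so the subtableau is
unchanged. Inserting `x ≤ k` performs on the subtableau exactly the bumps it performs on the whole
tableau, until the first row where a letter `> k` is bumped; there `x` simply lands at the end of
the row of the subtableau. Hence the subtableau of the `P`-tableau of any word is the `P`-tableau
of that word with its letters `> k` deleted.
-/

/-- Schensted row insertion of `x` into a single row: returns the new row together with
the bumped entry (if any).  `x` replaces the leftmost entry strictly larger than it. -/
def insertRow (x : ℕ) : List ℕ → List ℕ × Option ℕ
  | [] => ([x], none)
  | a :: as =>
    if x < a then (x :: as, some a)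
    else
      let p := insertRow x as
      (a :: p.1, p.2)

/-- Schensted insertion of `x` into a tableau (given as its list of rows). -/
def insertTableau (x : ℕ) : List (List ℕ) → List (List ℕ)
  | [] => [[x]]
  | r :: rs =>
    match insertRow x r with
    | (r', none) => r' :: rs
    | (r', some b) => r' :: insertTableau b rs

/-- The Robinson–Schensted `P`-tableau of a word, obtained by successive row insertion. -/
def RS (w : List ℕ) : List (List ℕ) :=
  w.foldl (fun t x => insertTableau x t) []

/-- The subtableau of a tableau on the letters `1,…,k`: keep only the entries `≤ k`. -/
def subtableau (k : ℕ) (t : List (List ℕ)) : List (List ℕ) :=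
  (t.map fun r => r.filter fun a => decide (a ≤ k)).filter fun r => decide (r ≠ [])

/-- The value sequence `φ(1), φ(2), …, φ(n)` of a permutation of `[n]`
(written with the letters `1,…,n`). -/
def valueSeq {n : ℕ} (φ : Equiv.Perm (Fin n)) : List ℕ :=
  List.ofFn fun i => (φ i : ℕ) + 1

theorem List.forall_le_or_exists_append_cons {α : Type*} [LinearOrder α] (x : α) (r : List α) :
    (∀ y ∈ r, y ≤ x) ∨ ∃ p a s, r = p ++ a :: s ∧ (∀ y ∈ p, y ≤ x) ∧ x < a := by
  induction r with
  | nil => simp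
  | cons b r ih =>
    by_cases hxb : x < b
    · exact .inr ⟨[], b, r, rfl, by simp, hxb⟩
    · rw [not_lt] at hxb
      rcases ih with hr | ⟨p, a, s, rfl, hp, hxa⟩
      · exact .inl (by simpa [hxb] using hr)
      · exact .inr ⟨b :: p, a, s, rfl, by simpa [hxb] using hp, hxa⟩

section Insertion

variable {x a : ℕ} {p r : List ℕ}

theorem insertRow_of_forall_le (h : ∀ y ∈ r, y ≤ x) : insertRow x r = (r ++ [x], none) := by
  induction r with
  | nil => rfl
  | cons b r ih =>
    simp only [List.forall_mem_cons] at h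
    simp [insertRow, not_lt.mpr h.1, ih h.2]

theorem insertRow_append_cons (s : List ℕ) (hp : ∀ y ∈ p, y ≤ x) (hxa : x < a) :
    insertRow x (p ++ a :: s) = (p ++ x :: s, some a) := by
  induction p with
  | nil => simp [insertRow, hxa]
  | cons b p ih =>
    simp only [List.forall_mem_cons] at hp
    simp [insertRow, not_lt.mpr hp.1, ih hp.2]

theorem insertTableau_cons_of_forall_le (rs : List (List ℕ)) (h : ∀ y ∈ r, y ≤ x) :
    insertTableau x (r :: rs) = (r ++ [x]) :: rs := by
  simp [insertTableau, insertRow_of_forall_le h]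

theorem insertTableau_append_cons (s : List ℕ) (rs : List (List ℕ)) (hp : ∀ y ∈ p, y ≤ x)
    (hxa : x < a) : insertTableau x ((p ++ a :: s) :: rs) = (p ++ x :: s) :: insertTableau a rs := by
  simp [insertTableau, insertRow_append_cons s hp hxa]

theorem flatten_insertTableau_subset :
    ∀ (x : ℕ) (t : List (List ℕ)), (insertTableau x t).flatten ⊆ x :: t.flatten
  | x, [] => by simp [insertTableau]
  | x, r :: rs => by
    rcases r.forall_le_or_exists_append_cons x with hr | ⟨p, a, s, rfl, hp, hxa⟩
    · rw [insertTableau_cons_of_forall_le rs hr]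
      intro y
      simp only [List.flatten_cons, List.mem_append, List.mem_cons]
      tauto
    · rw [insertTableau_append_cons s rs hp hxa]
      intro y hy
      have hrec := @flatten_insertTableau_subset a rs y
      simp only [List.flatten_cons, List.mem_append, List.mem_cons] at hy hrec ⊢
      tauto

end Insertion

/-- Weaker than column strictness, but preserved by insertion; it guarantees that below a row
starting with a letter `> k` every letter is `> k`. -/
def IsWeakTableau : List (List ℕ) → Prop
  | [] => True
  | r :: rs => r ≠ [] ∧ r.Pairwise (· ≤ ·) ∧ (∀ y ∈ rs.flatten, ∃ z ∈ r, z < y) ∧ IsWeakTableau rs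

theorem IsWeakTableau.insertTableau (x : ℕ) :
    ∀ {t : List (List ℕ)}, IsWeakTableau t → IsWeakTableau (insertTableau x t)
  | [], _ => by simp [_root_.insertTableau, IsWeakTableau]
  | r :: rs, ⟨hne, hsorted, hbelow, hrs⟩ => by
    rcases r.forall_le_or_exists_append_cons x with hr | ⟨p, a, s, rfl, hp, hxa⟩
    · rw [insertTableau_cons_of_forall_le rs hr]
      refine ⟨by simp, ?_, fun y hy => ?_, hrs⟩
      · simpa [List.pairwise_append] using ⟨hsorted, hr⟩
      · obtain ⟨z, hz, hzy⟩ := hbelow y hy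
        exact ⟨z, by simp [hz], hzy⟩
    · rw [insertTableau_append_cons s rs hp hxa]
      have hsorted' := hsorted
      simp only [List.pairwise_append, List.pairwise_cons, List.mem_cons,
        forall_eq_or_imp] at hsorted'
      obtain ⟨hpsorted, ⟨has, hssorted⟩, hps⟩ := hsorted'
      refine ⟨by simp, ?_, fun y hy => ?_, hrs.insertTableau a⟩
      · simp only [List.pairwise_append, List.pairwise_cons, List.mem_cons, forall_eq_or_imp]
        exact ⟨hpsorted, ⟨fun b hb => hxa.le.trans (has b hb), hssorted⟩,
          fun b hb => ⟨hp b hb, (hps b hb).2⟩⟩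
      · have hx : x ∈ p ++ x :: s := by simp
        rcases List.mem_cons.mp (flatten_insertTableau_subset a rs hy) with rfl | hy
        · exact ⟨x, hx, hxa⟩
        obtain ⟨z, hz, hzy⟩ := hbelow y hy
        simp only [List.mem_append, List.mem_cons] at hz
        rcases hz with hz | rfl | hz
        · exact ⟨z, by simp [hz], hzy⟩
        · exact ⟨x, hx, hxa.trans hzy⟩
        · exact ⟨x, hx, hxa.trans_le ((has z hz).trans_lt hzy).le⟩

section Subtableau

variable {k : ℕ}

theorem subtableau_cons_of_filter_eq_nil {r : List ℕ} (t : List (List ℕ))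
    (hr : r.filter (· ≤ k) = []) : subtableau k (r :: t) = subtableau k t := by
  simp [subtableau, hr]

theorem subtableau_cons_of_filter_ne_nil {r : List ℕ} (t : List (List ℕ))
    (hr : r.filter (· ≤ k) ≠ []) : subtableau k (r :: t) = r.filter (· ≤ k) :: subtableau k t := by
  simp [subtableau, hr]

theorem subtableau_cons_congr {r r' : List ℕ} {t t' : List (List ℕ)}
    (hr : r.filter (· ≤ k) = r'.filter (· ≤ k)) (ht : subtableau k t = subtableau k t') :
    subtableau k (r :: t) = subtableau k (r' :: t') := by
  by_cases h : r.filter (· ≤ k) = []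
  · rw [subtableau_cons_of_filter_eq_nil t h, subtableau_cons_of_filter_eq_nil t' (hr ▸ h), ht]
  · rw [subtableau_cons_of_filter_ne_nil t h, subtableau_cons_of_filter_ne_nil t' (hr ▸ h), hr, ht]

theorem subtableau_eq_nil {t : List (List ℕ)} (ht : ∀ y ∈ t.flatten, k < y) :
    subtableau k t = [] := by
  simp only [subtableau, List.filter_eq_nil_iff, List.mem_map]
  rintro _ ⟨r, hr, rfl⟩
  simpa [List.filter_eq_nil_iff] using fun y hy => ht y (List.mem_flatten.mpr ⟨r, hr, hy⟩)

theorem subtableau_insertTableau_of_lt :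
    ∀ {x : ℕ} (t : List (List ℕ)), k < x → subtableau k (insertTableau x t) = subtableau k t
  | x, [], hkx => subtableau_cons_of_filter_eq_nil [] (by simpa using hkx)
  | x, r :: rs, hkx => by
    rcases r.forall_le_or_exists_append_cons x with hr | ⟨p, a, s, rfl, hp, hxa⟩
    · rw [insertTableau_cons_of_forall_le rs hr]
      exact subtableau_cons_congr (by simp [hkx]) rfl
    · rw [insertTableau_append_cons s rs hp hxa]
      exact subtableau_cons_congr (by simp [hkx, (hkx.trans hxa)])
        (subtableau_insertTableau_of_lt rs (hkx.trans hxa))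

-- The bumped `a > k` and every letter it displaces further down are invisible in the subtableau.
theorem subtableau_insertTableau_of_le_of_bump_gt {x a : ℕ} {p s : List ℕ} {rs : List (List ℕ)}
    (hxk : x ≤ k) (hka : k < a) (hp : ∀ y ∈ p, y ≤ x) (hxa : x < a)
    (ht : IsWeakTableau ((p ++ a :: s) :: rs)) :
    subtableau k (insertTableau x ((p ++ a :: s) :: rs)) =
      insertTableau x (subtableau k ((p ++ a :: s) :: rs)) := by
  obtain ⟨-, hsorted, hbelow, -⟩ := ht
  have has : ∀ b ∈ s, a ≤ b := (List.pairwise_cons.mp (List.pairwise_append.mp hsorted).2.1).1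
  have hpk : p.filter (· ≤ k) = p :=
    List.filter_eq_self.mpr (by simpa using fun y hy => (hp y hy).trans hxk)
  have hsk : s.filter (· ≤ k) = [] := by
    simpa [List.filter_eq_nil_iff] using fun b hb => hka.trans_le (has b hb)
  have hfilter_a : (p ++ a :: s).filter (· ≤ k) = p := by
    simp [List.filter_append, hpk, hsk, hka]
  have hfilter_x : (p ++ x :: s).filter (· ≤ k) = p ++ [x] := by
    simp [List.filter_append, hpk, hsk, hxk]
  rw [insertTableau_append_cons s rs hp hxa,
    subtableau_cons_of_filter_ne_nil _ (by simp [hfilter_x]), hfilter_x,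
    subtableau_insertTableau_of_lt rs hka]
  rcases eq_or_ne p [] with rfl | hp_ne
  · have hrs_gt : ∀ y ∈ rs.flatten, k < y := fun y hy => by
      obtain ⟨z, hz, hzy⟩ := hbelow y hy
      rcases List.mem_cons.mp hz with rfl | hz
      exacts [hka.trans hzy, (hka.trans_le (has z hz)).trans hzy]
    rw [subtableau_cons_of_filter_eq_nil rs hfilter_a, subtableau_eq_nil hrs_gt]
    simp [insertTableau]
  · rw [subtableau_cons_of_filter_ne_nil rs (by rwa [hfilter_a]), hfilter_a,
      insertTableau_cons_of_forall_le _ hp]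

theorem subtableau_insertTableau_of_le :
    ∀ {x : ℕ} {t : List (List ℕ)}, x ≤ k → IsWeakTableau t →
      subtableau k (insertTableau x t) = insertTableau x (subtableau k t)
  | x, [], hxk, _ => by simp [subtableau, insertTableau, hxk]
  | x, r :: rs, hxk, ht => by
    rcases r.forall_le_or_exists_append_cons x with hr | ⟨p, a, s, rfl, hp, hxa⟩
    · have hrk : r.filter (· ≤ k) = r :=
        List.filter_eq_self.mpr (by simpa using fun y hy => (hr y hy).trans hxk)
      rw [insertTableau_cons_of_forall_le rs hr,
        subtableau_cons_of_filter_ne_nil rs (by simp [List.filter_append, hxk]),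
        subtableau_cons_of_filter_ne_nil rs (by rw [hrk]; exact ht.1), List.filter_append, hrk,
        insertTableau_cons_of_forall_le _ hr]
      simp [hxk]
    rcases le_or_gt a k with hak | hka
    · have hfilter (b : ℕ) (hb : b ≤ k) :
          (p ++ b :: s).filter (· ≤ k) = p ++ b :: s.filter (· ≤ k) := by
        have hpk : p.filter (· ≤ k) = p :=
          List.filter_eq_self.mpr (by simpa using fun y hy => (hp y hy).trans hxk)
        simp [List.filter_append, hpk, hb]
      rw [insertTableau_append_cons s rs hp hxa,
        subtableau_cons_of_filter_ne_nil _ (by simp [hfilter x hxk]),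
        subtableau_cons_of_filter_ne_nil _ (by simp [hfilter a hak]), hfilter x hxk,
        hfilter a hak, insertTableau_append_cons _ _ hp hxa,
        subtableau_insertTableau_of_le hak ht.2.2.2]
    · exact subtableau_insertTableau_of_le_of_bump_gt hxk hka hp hxa ht

theorem subtableau_foldl_insertTableau :
    ∀ (w : List ℕ) {t : List (List ℕ)}, IsWeakTableau t →
      subtableau k (w.foldl (fun t x => insertTableau x t) t) =
        (w.filter (· ≤ k)).foldl (fun t x => insertTableau x t) (subtableau k t)
  | [], _, _ => rfl
  | x :: w, t, ht => by
    by_cases hxk : x ≤ k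
    · rw [List.foldl_cons, List.filter_cons_of_pos (by simpa using hxk), List.foldl_cons,
        ← subtableau_insertTableau_of_le hxk ht]
      exact subtableau_foldl_insertTableau w (ht.insertTableau x)
    · rw [List.foldl_cons, List.filter_cons_of_neg (by simpa using hxk),
        ← subtableau_insertTableau_of_lt t (not_le.mp hxk)]
      exact subtableau_foldl_insertTableau w (ht.insertTableau x)

theorem subtableau_RS (w : List ℕ) : subtableau k (RS w) = RS (w.filter (· ≤ k)) :=
  subtableau_foldl_insertTableau w trivial

end Subtableau

theorem rs_subtableau_depends_only_on_order_general (n m k : ℕ)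
    (φ : Equiv.Perm (Fin n)) (ψ : Equiv.Perm (Fin m))
    (h : (valueSeq φ).filter (fun a => decide (a ≤ k)) =
         (valueSeq ψ).filter (fun a => decide (a ≤ k))) :
    subtableau k (RS (valueSeq φ)) = subtableau k (RS (valueSeq ψ)) := by
  rw [subtableau_RS, subtableau_RS, h]

/-- In the Robinson–Schensted correspondence between involutions and
standard Young tableaux, the subtableau on the letters `1,…,k` of the tableau of an
involution depends only on the relative order of the letters `1,…,k` in its value
sequence: if deleting all values greater than `k` from the value sequences of two
involutions yields the same word, then the corresponding subtableaux agree. -/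
theorem rs_subtableau_depends_only_on_order (n m k : ℕ)
    (φ : Equiv.Perm (Fin n)) (ψ : Equiv.Perm (Fin m))
    (hφ : φ * φ = 1) (hψ : ψ * ψ = 1)
    (h : (valueSeq φ).filter (fun a => decide (a ≤ k)) =
         (valueSeq ψ).filter (fun a => decide (a ≤ k))) :
    subtableau k (RS (valueSeq φ)) = subtableau k (RS (valueSeq ψ)) :=
  rs_subtableau_depends_only_on_order_general n m k φ ψ h
end

section
/- Let σ be a fixed permutation of [k], and let F_n(σ) be the number of involutions of [n] that contain σ as a subsequence. Then lim_{n→∞} F_n(σ)/t_n = 1/k!; i.e., the probability that a uniformly random involution of [n] contains σ as a subsequence is 1/k! + o(1) as n → ∞. -/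
/-!
For `k ≤ n` every permutation of `[n]` contains exactly one pattern `σ ∈ S_k`. Call an involution
`φ` of `[n]` separated (`MapsLowToHigh k φ`) if it sends each of `1, …, k` above `k`.
Conjugating by a permutation `τ` of `[k]`, acting on the first `k` points, maps separated
involutions to separated involutions and turns pattern `σ` into `τ σ`; so separated involutions
are equidistributed among the `k!` patterns. A non-separated involution has `φ x = y` for some
`x, y ≤ k`, so there are at most `k² t_{n-1}` of them, and `t_{n-1} / t_n ≤ 1 / √n` by the
recurrence `t_{n+1} = t_n + n t_{n-1}`.
-/

open Filter

/-- `t_n`, the number of involutions of `[n]`. -/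
noncomputable def tInv (n : ℕ) : ℕ := Nat.card {φ : Equiv.Perm (Fin n) // φ * φ = 1}

/-- A permutation `φ` of `[n]` contains the permutation `σ` of `[k]` as a subsequence:
the word obtained from `φ(1),…,φ(n)` by deleting all values greater than `k` is
`σ(1),…,σ(k)`; equivalently, there are positions `i₁ < ⋯ < i_k` with `φ(i_j) = σ(j)`. -/
def ContainsPattern {n k : ℕ} (φ : Equiv.Perm (Fin n)) (σ : Equiv.Perm (Fin k)) : Prop :=
  ∃ g : Fin k → Fin n, StrictMono g ∧ ∀ j, (φ (g j) : ℕ) = (σ j : ℕ)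

open Equiv Finset

lemma Nat.card_subtype_mono {α : Type*} [Finite α] {p q : α → Prop} (h : ∀ x, p x → q x) :
    Nat.card {x // p x} ≤ Nat.card {x // q x} :=
  Nat.card_le_card_of_injective _ (Subtype.impEmbedding p q h).injective

lemma Nat.card_subtype_eq_add {α : Type*} [Finite α] (p q : α → Prop) :
    Nat.card {x // p x} = Nat.card {x // p x ∧ q x} + Nat.card {x // p x ∧ ¬ q x} := by
  classical
  rw [← Nat.card_congr (Equiv.sumCompl fun y : {x // p x} ↦ q y), Nat.card_sum,
    Nat.card_congr (subtypeSubtypeEquivSubtypeInter p q),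
    Nat.card_congr (subtypeSubtypeEquivSubtypeInter p (¬ q ·))]

lemma Nat.card_subtype_eq_sum_card_fiber {α β : Type*} [Finite α] [Fintype β]
    (p : α → Prop) (f : α → β) :
    Nat.card {x // p x} = ∑ b, Nat.card {x // p x ∧ f x = b} := by
  rw [← Nat.card_congr (Equiv.sigmaFiberEquiv fun x : {x // p x} ↦ f x), Nat.card_sigma]
  exact Finset.sum_congr rfl fun b _ ↦
    Nat.card_congr (Equiv.subtypeSubtypeEquivSubtypeInter p (f · = b))

lemma Nat.card_subtype_and_exists_le_sum {α ι : Type*} [Finite α] [Fintype ι] (p : α → Prop)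
    (q : ι → α → Prop) :
    Nat.card {x // p x ∧ ∃ i, q i x} ≤ ∑ i, Nat.card {x // p x ∧ q i x} :=
  (Nat.card_le_card_of_surjective
    (fun y : Σ i, {x // p x ∧ q i x} ↦ ⟨y.2, y.2.2.1, y.1, y.2.2.2⟩)
    fun ⟨x, hp, i, hq⟩ ↦ ⟨⟨i, x, hp, hq⟩, rfl⟩).trans_eq Nat.card_sigma

lemma abs_div_sub_one_div_le {F M N K : ℝ} (hK : 1 ≤ K) (hT : 0 < K * M + N)
    (hMF : M ≤ F) (hFM : F ≤ M + N) : |F / (K * M + N) - 1 / K| ≤ N / (K * M + N) := by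
  have hK0 : 0 < K := by linarith
  have hnum : |F * K - (K * M + N) * 1| ≤ N * K := abs_le.mpr ⟨by nlinarith, by nlinarith⟩
  rw [div_sub_div _ _ hT.ne' hK0.ne', abs_div, abs_of_pos (mul_pos hT hK0),
    div_le_div_iff₀ (mul_pos hT hK0) hT]
  calc _ ≤ N * K * (K * M + N) := by gcongr
    _ = _ := by ring

lemma mul_self_eq_one_iff_of_injective {G H F : Type*} [Monoid G] [Monoid H] [FunLike F G H]
    [MonoidHomClass F G H] {f : F} (hf : Function.Injective f) (g : G) :
    f g * f g = 1 ↔ g * g = 1 := by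
  rw [← map_mul, ← map_one f, hf.eq_iff]

lemma mul_swap_mul_self_of_apply {α : Type*} [DecidableEq α] {φ : Perm α} {a b : α}
    (hab : φ a = b) (hba : φ b = a) :
    φ * swap a b * (φ * swap a b) = φ * φ := by
  have hcomm : φ * swap a b = swap a b * φ := by rw [mul_swap_eq_swap_mul, hab, hba, swap_comm]
  rw [mul_assoc, ← mul_assoc (swap a b), ← hcomm, mul_assoc, swap_mul_self, mul_one]

lemma card_involutions_eq_tInv (α : Type*) [Fintype α] :
    Nat.card {φ : Perm α // φ * φ = 1} = tInv (Fintype.card α) :=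
  Nat.card_congr <| (Fintype.equivFin α).permCongrHom.toEquiv.subtypeEquiv fun φ ↦
    (mul_self_eq_one_iff_of_injective (f := (Fintype.equivFin α).permCongrHom.toMonoidHom)
      (MulEquiv.injective _) φ).symm

section Involutions

variable {α : Type*} [Fintype α]

lemma card_involutions_fixing_compl (p : α → Prop) [DecidablePred p] :
    Nat.card {φ : Perm α // φ * φ = 1 ∧ ∀ a, ¬ p a → φ a = a} =
      tInv (Fintype.card (Subtype p)) := by
  rw [← card_involutions_eq_tInv]
  refine (Nat.card_congr <| ((Perm.subtypeEquivSubtypePerm p).subtypeEquiv fun ψ ↦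
    (mul_self_eq_one_iff_of_injective Perm.ofSubtype_injective ψ).symm).trans <|
      (subtypeSubtypeEquivSubtypeInter _ (fun φ : Perm α ↦ φ * φ = 1)).trans <|
      subtypeEquivRight fun _ ↦ and_comm).symm

variable [DecidableEq α]

lemma card_involutions_apply_self (a : α) :
    Nat.card {φ : Perm α // φ * φ = 1 ∧ φ a = a} = tInv (Fintype.card α - 1) := by
  have hcard : Fintype.card {x // x ≠ a} = Fintype.card α - 1 := by simp
  rw [← hcard, ← card_involutions_fixing_compl]
  exact Nat.card_congr <| subtypeEquivRight fun φ ↦ by simp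

lemma card_involutions_apply_of_ne {a b : α} (hab : a ≠ b) :
    Nat.card {φ : Perm α // φ * φ = 1 ∧ φ a = b} = tInv (Fintype.card α - 2) := by
  have hcard : Fintype.card {x // ¬ (x = a ∨ x = b)} = Fintype.card α - 2 := by
    rw [← Finset.card_pair hab, ← Finset.card_compl, Fintype.card_subtype]
    congr 1; ext; simp
  rw [← hcard, ← card_involutions_fixing_compl]
  refine Nat.card_congr <| (Equiv.mulRight (swap a b)).subtypeEquiv fun φ ↦ ?_
  simp only [coe_mulRight, not_not, forall_eq_or_imp, forall_eq, Perm.mul_apply, swap_apply_left,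
    swap_apply_right]
  constructor
  · rintro ⟨hinv, hφa⟩
    have hφb : φ b = a := by rw [← hφa, ← Perm.mul_apply, hinv, Perm.one_apply]
    exact ⟨(mul_swap_mul_self_of_apply hφa hφb).trans hinv, hφb, hφa⟩
  · rintro ⟨hinv, hφb, hφa⟩
    exact ⟨(mul_swap_mul_self_of_apply hφa hφb).symm.trans hinv, hφa⟩

end Involutions

lemma tInv_add_two (n : ℕ) : tInv (n + 2) = tInv (n + 1) + (n + 1) * tInv n := by
  have hfix := card_involutions_apply_self (0 : Fin (n + 2))
  have hmove : ∀ b ∈ univ.erase (0 : Fin (n + 2)),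
      Nat.card {φ : Perm (Fin (n + 2)) // φ * φ = 1 ∧ φ 0 = b} = tInv n := fun b hb ↦ by
    rw [card_involutions_apply_of_ne (ne_of_mem_erase hb).symm, Fintype.card_fin,
      Nat.add_sub_cancel]
  rw [tInv, Nat.card_subtype_eq_sum_card_fiber _ (fun φ : Perm (Fin (n + 2)) ↦ φ 0),
    ← add_sum_erase _ _ (mem_univ 0), hfix, sum_congr rfl hmove, sum_const,
    card_erase_of_mem (mem_univ _)]
  simp

lemma tInv_zero : tInv 0 = 1 :=
  Nat.card_eq_one_iff_unique.mpr ⟨inferInstance, ⟨⟨1, mul_one 1⟩⟩⟩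

lemma tInv_one : tInv 1 = 1 :=
  Nat.card_eq_one_iff_unique.mpr ⟨inferInstance, ⟨⟨1, mul_one 1⟩⟩⟩

lemma tInv_pos (n : ℕ) : 0 < tInv n :=
  Nat.card_pos_iff.mpr ⟨⟨⟨1, mul_one 1⟩⟩, inferInstance⟩

lemma tInv_le_tInv_succ (n : ℕ) : tInv n ≤ tInv (n + 1) := by
  have hfix := card_involutions_apply_self (Fin.last n)
  rw [Fintype.card_fin, Nat.add_sub_cancel] at hfix
  exact hfix ▸ Nat.card_subtype_mono fun _ h ↦ h.1

lemma tInv_monotone : Monotone tInv := monotone_nat_of_le_succ tInv_le_tInv_succ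

lemma card_involutions_apply_le {α : Type*} [Fintype α] [DecidableEq α] (a b : α) :
    Nat.card {φ : Perm α // φ * φ = 1 ∧ φ a = b} ≤ tInv (Fintype.card α - 1) := by
  rcases eq_or_ne a b with rfl | hab
  · exact (card_involutions_apply_self a).le
  · exact (card_involutions_apply_of_ne hab).trans_le (tInv_monotone (by omega))

-- The upper bound is only there to carry the induction.
lemma tInv_succ_sqrt_bounds (n : ℕ) :
    √(n + 1 : ℝ) * tInv n ≤ tInv (n + 1) ∧
      (tInv (n + 1) : ℝ) ≤ (√(n + 1 : ℝ) + 1) * tInv n := by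
  induction n with
  | zero => simp [tInv_zero, tInv_one]
  | succ n ih =>
    obtain ⟨hlow, hup⟩ := ih
    set s := √(n + 1 : ℝ)
    set u := √((n + 1 : ℕ) + 1 : ℝ)
    have hs : s ^ 2 = n + 1 := Real.sq_sqrt (by positivity)
    have hu : u ^ 2 = s ^ 2 + 1 := by rw [hs, Real.sq_sqrt (by positivity)]; push_cast; ring
    have hs1 : 1 ≤ s := Real.one_le_sqrt.mpr (by simp)
    have hsu : s ≤ u := Real.sqrt_le_sqrt (by push_cast; linarith)
    have hu0 : 0 ≤ u := Real.sqrt_nonneg _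
    have hrec : (tInv (n + 2) : ℝ) = tInv (n + 1) + s ^ 2 * tInv n := by
      rw [tInv_add_two, hs]; push_cast; ring
    -- `(u (s + 1))² = (s² + s + 1)² - s²`
    have hkey : u * (s + 1) ≤ s ^ 2 + s + 1 := by nlinarith
    have ht0 : (0 : ℝ) ≤ tInv n := by positivity
    have ht1 : (0 : ℝ) ≤ tInv (n + 1) := by positivity
    constructor
    · rw [hrec]; nlinarith
    · rw [hrec]; nlinarith

lemma tendsto_tInv_div_tInv_succ :
    Tendsto (fun n ↦ (tInv n : ℝ) / tInv (n + 1)) atTop (nhds 0) := by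
  have hsqrt : Tendsto (fun n : ℕ ↦ √(1 / ((n : ℝ) + 1))) atTop (nhds 0) := by
    simpa using tendsto_one_div_add_atTop_nhds_zero_nat.sqrt
  refine squeeze_zero (fun n ↦ by positivity) (fun n ↦ ?_) hsqrt
  have hpos : (0 : ℝ) < tInv (n + 1) := by exact_mod_cast tInv_pos _
  have hsq : (0 : ℝ) < √(n + 1 : ℝ) := Real.sqrt_pos.mpr (by positivity)
  rw [div_le_iff₀ hpos, one_div, Real.sqrt_inv, inv_mul_eq_div, le_div_iff₀ hsq, mul_comm]
  exact (tInv_succ_sqrt_bounds n).1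

section Patterns

variable {n k : ℕ}

def lowValuePositions (k : ℕ) (φ : Perm (Fin n)) : Finset (Fin n) :=
  univ.filter fun i ↦ (φ i : ℕ) < k

lemma card_lowValuePositions (hkn : k ≤ n) (φ : Perm (Fin n)) :
    #(lowValuePositions k φ) = k := by
  rw [lowValuePositions, ← Fintype.card_subtype, Fintype.card_congr
    ((φ.subtypeEquiv fun _ ↦ Iff.rfl).trans (Fin.castLEquiv hkn).symm), Fintype.card_fin]

def pattern (hkn : k ≤ n) (φ : Perm (Fin n)) : Perm (Fin k) :=
  ((lowValuePositions k φ).orderIsoOfFin (card_lowValuePositions hkn φ)).toEquiv.trans <|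
    (φ.subtypeEquiv fun i ↦ by simp [lowValuePositions]).trans (Fin.castLEquiv hkn).symm

lemma pattern_apply_val (hkn : k ≤ n) (φ : Perm (Fin n)) (j : Fin k) :
    (pattern hkn φ j : ℕ) =
      φ ((lowValuePositions k φ).orderEmbOfFin (card_lowValuePositions hkn φ) j) :=
  rfl

lemma containsPattern_iff_pattern_eq (hkn : k ≤ n) (φ : Perm (Fin n)) (σ : Perm (Fin k)) :
    ContainsPattern φ σ ↔ pattern hkn φ = σ := by
  constructor
  · rintro ⟨g, hg, hφg⟩
    have hmem : ∀ j, g j ∈ lowValuePositions k φ := fun j ↦ by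
      simp [lowValuePositions, hφg]
    have hgeq := Finset.orderEmbOfFin_unique (card_lowValuePositions hkn φ) hmem hg
    ext j
    rw [pattern_apply_val, ← hgeq, hφg]
  · rintro rfl
    exact ⟨_, (OrderEmbedding.strictMono _), fun j ↦ (pattern_apply_val hkn φ j).symm⟩

def MapsLowToHigh (k : ℕ) (φ : Perm (Fin n)) : Prop :=
  ∀ x : Fin n, (x : ℕ) < k → k ≤ (φ x : ℕ)

def liftLow (hkn : k ≤ n) : Perm (Fin k) →* Perm (Fin n) :=
  Perm.extendDomainHom (Fin.castLEquiv hkn)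

lemma val_liftLow_apply_of_lt (hkn : k ≤ n) (τ : Perm (Fin k)) {x : Fin n} (hx : (x : ℕ) < k) :
    (liftLow hkn τ x : ℕ) = τ ⟨x, hx⟩ := by
  rw [liftLow, Perm.extendDomainHom_apply, Perm.extendDomain_apply_subtype τ _ (b := x) hx]
  rfl

lemma liftLow_apply_of_le (hkn : k ≤ n) (τ : Perm (Fin k)) {x : Fin n} (hx : k ≤ (x : ℕ)) :
    liftLow hkn τ x = x :=
  Perm.extendDomain_apply_not_subtype _ _ hx.not_gt

lemma val_liftLow_apply_lt_of_lt (hkn : k ≤ n) (τ : Perm (Fin k)) {x : Fin n}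
    (hx : (x : ℕ) < k) :
    (liftLow hkn τ x : ℕ) < k :=
  val_liftLow_apply_of_lt hkn τ hx ▸ (τ _).isLt

lemma MapsLowToHigh.conj (hkn : k ≤ n) (τ : Perm (Fin k)) {φ : Perm (Fin n)}
    (hφ : MapsLowToHigh k φ) : MapsLowToHigh k (MulAut.conj (liftLow hkn τ) φ) := by
  intro x hx
  rw [MulAut.conj_apply, ← map_inv, Perm.mul_apply, Perm.mul_apply,
    liftLow_apply_of_le hkn τ (hφ _ (val_liftLow_apply_lt_of_lt hkn _ hx))]
  exact hφ _ (val_liftLow_apply_lt_of_lt hkn _ hx)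

lemma ContainsPattern.conj (hkn : k ≤ n) (τ : Perm (Fin k)) {φ : Perm (Fin n)}
    {σ : Perm (Fin k)} (hφ : MapsLowToHigh k φ) (hσ : ContainsPattern φ σ) :
    ContainsPattern (MulAut.conj (liftLow hkn τ) φ) (τ * σ) := by
  obtain ⟨g, hg, hφg⟩ := hσ
  refine ⟨g, hg, fun j ↦ ?_⟩
  have hlow : (φ (g j) : ℕ) < k := hφg j ▸ (σ j).isLt
  have hhigh : k ≤ (g j : ℕ) := not_lt.mp fun h ↦ (hφ _ h).not_gt hlow
  rw [MulAut.conj_apply, ← map_inv, Perm.mul_apply, Perm.mul_apply,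
    liftLow_apply_of_le hkn _ hhigh, val_liftLow_apply_of_lt hkn τ hlow, Perm.mul_apply]
  congr 2
  exact Fin.ext (hφg j)

lemma card_involutions_mapsLowToHigh_containsPattern_eq (hkn : k ≤ n)
    (σ₁ σ₂ : Perm (Fin k)) :
    Nat.card {φ : Perm (Fin n) //
        φ * φ = 1 ∧ MapsLowToHigh k φ ∧ ContainsPattern φ σ₁} =
      Nat.card {φ : Perm (Fin n) //
        φ * φ = 1 ∧ MapsLowToHigh k φ ∧ ContainsPattern φ σ₂} := by
  have hconj : ∀ (τ σ : Perm (Fin k)) (φ : Perm (Fin n)),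
      φ * φ = 1 ∧ MapsLowToHigh k φ ∧ ContainsPattern φ σ →
        (MulAut.conj (liftLow hkn τ) φ) * (MulAut.conj (liftLow hkn τ) φ) = 1 ∧
        MapsLowToHigh k (MulAut.conj (liftLow hkn τ) φ) ∧
        ContainsPattern (MulAut.conj (liftLow hkn τ) φ) (τ * σ) :=
    fun τ σ φ ⟨hinv, hφ, hσ⟩ ↦
      ⟨(mul_self_eq_one_iff_of_injective (MulEquiv.injective _) φ).mpr hinv,
        hφ.conj hkn τ, hσ.conj hkn τ hφ⟩
  set τ := σ₂ * σ₁⁻¹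
  refine Nat.card_congr <| (MulAut.conj (liftLow hkn τ)).toEquiv.subtypeEquiv
    fun φ ↦ ⟨fun h ↦ by simpa [τ] using hconj τ σ₁ φ h, fun h ↦ ?_⟩
  have hback : MulAut.conj (liftLow hkn τ⁻¹) (MulAut.conj (liftLow hkn τ) φ) = φ := by
    rw [← MulAut.mul_apply, ← map_mul, ← map_mul, inv_mul_cancel, map_one, map_one,
      MulAut.one_apply]
  have hpat : τ⁻¹ * σ₂ = σ₁ := by simp [τ]
  have := hconj τ⁻¹ σ₂ _ h
  rwa [MulEquiv.toEquiv_eq_coe, MulEquiv.coe_toEquiv, hback, hpat] at this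

lemma card_involutions_mapsLowToHigh_eq (hkn : k ≤ n) (σ : Perm (Fin k)) :
    Nat.card {φ : Perm (Fin n) // φ * φ = 1 ∧ MapsLowToHigh k φ} =
      k.factorial * Nat.card {φ : Perm (Fin n) //
        φ * φ = 1 ∧ MapsLowToHigh k φ ∧ ContainsPattern φ σ} := by
  rw [Nat.card_subtype_eq_sum_card_fiber _ (pattern hkn)]
  simp_rw [and_assoc, ← containsPattern_iff_pattern_eq,
    card_involutions_mapsLowToHigh_containsPattern_eq hkn _ σ]
  rw [sum_const, card_univ, Fintype.card_perm, Fintype.card_fin, smul_eq_mul]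

lemma card_involutions_not_mapsLowToHigh_le (hkn : k ≤ n + 1) :
    Nat.card {φ : Perm (Fin (n + 1)) // φ * φ = 1 ∧ ¬ MapsLowToHigh k φ} ≤
      k * k * tInv n := by
  have hlow : ∀ φ : Perm (Fin (n + 1)), ¬ MapsLowToHigh k φ →
      ∃ xy : Fin k × Fin k, φ (Fin.castLE hkn xy.1) = Fin.castLE hkn xy.2 := by
    intro φ hφ
    obtain ⟨x, hx, hφx⟩ : ∃ x : Fin (n + 1), (x : ℕ) < k ∧ (φ x : ℕ) < k := by
      simpa [MapsLowToHigh] using hφ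
    exact ⟨(⟨x, hx⟩, ⟨φ x, hφx⟩), rfl⟩
  calc _ ≤ ∑ xy : Fin k × Fin k, Nat.card {φ : Perm (Fin (n + 1)) //
          φ * φ = 1 ∧ φ (Fin.castLE hkn xy.1) = Fin.castLE hkn xy.2} :=
        (Nat.card_subtype_mono fun φ h ↦ ⟨h.1, hlow φ h.2⟩).trans
          (Nat.card_subtype_and_exists_le_sum _ _)
    _ ≤ ∑ _xy : Fin k × Fin k, tInv n := sum_le_sum fun xy _ ↦ by
        simpa using card_involutions_apply_le (Fin.castLE hkn xy.1) (Fin.castLE hkn xy.2)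
    _ = k * k * tInv n := by simp

lemma abs_card_containsPattern_div_sub_le (hkn : k ≤ n) (σ : Perm (Fin k)) :
    |(Nat.card {φ : Perm (Fin n) // φ * φ = 1 ∧ ContainsPattern φ σ} : ℝ) / tInv n -
        1 / k.factorial| ≤
      Nat.card {φ : Perm (Fin n) // φ * φ = 1 ∧ ¬ MapsLowToHigh k φ} / tInv n := by
  set F := Nat.card {φ : Perm (Fin n) // φ * φ = 1 ∧ ContainsPattern φ σ}
  set M :=
    Nat.card {φ : Perm (Fin n) // φ * φ = 1 ∧ MapsLowToHigh k φ ∧ ContainsPattern φ σ}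
  set N := Nat.card {φ : Perm (Fin n) // φ * φ = 1 ∧ ¬ MapsLowToHigh k φ}
  have hT : tInv n = k.factorial * M + N := by
    rw [tInv, Nat.card_subtype_eq_add _ (MapsLowToHigh k),
      card_involutions_mapsLowToHigh_eq hkn σ]
  have hMF : M ≤ F := Nat.card_subtype_mono fun φ h ↦ ⟨h.1, h.2.2⟩
  have hFM : F ≤ M + N :=
    (Nat.card_subtype_eq_add _ (MapsLowToHigh k)).trans_le <|
      add_le_add (Nat.card_subtype_mono fun _ h ↦ ⟨h.1.1, h.2, h.1.2⟩)
        (Nat.card_subtype_mono fun _ h ↦ ⟨h.1.1, h.2⟩)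
  have hpos := tInv_pos n
  rw [hT] at hpos ⊢
  push_cast
  exact abs_div_sub_one_div_le (by exact_mod_cast k.factorial_pos) (by exact_mod_cast hpos)
    (by exact_mod_cast hMF) (by exact_mod_cast hFM)

end Patterns

/-- For a fixed permutation `σ` of `[k]`, the probability that a random
involution of `[n]` contains `σ` as a subsequence tends to `1/k!` as `n → ∞`. -/
theorem involution_pattern_prob (k : ℕ) (σ : Equiv.Perm (Fin k)) :
    Tendsto
      (fun n : ℕ =>
        (Nat.card {φ : Equiv.Perm (Fin n) // φ * φ = 1 ∧ ContainsPattern φ σ} : ℝ) /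
          (tInv n : ℝ))
      atTop (nhds (1 / (Nat.factorial k : ℝ))) := by
  rw [← tendsto_add_atTop_iff_nat (k + 1)]
  simp only [← add_assoc]
  have hbound := (tendsto_tInv_div_tInv_succ.comp (tendsto_add_atTop_nat k)).const_mul
    ((k * k : ℕ) : ℝ)
  rw [mul_zero] at hbound
  refine tendsto_iff_norm_sub_tendsto_zero.mpr
    (squeeze_zero (fun _ ↦ norm_nonneg _) (fun m ↦ ?_) hbound)
  calc _ ≤ _ := abs_card_containsPattern_div_sub_le (n := m + k + 1) (by omega) σ
    _ ≤ ((k * k * tInv (m + k) : ℕ) : ℝ) / tInv (m + k + 1) := by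
        gcongr
        exact card_involutions_not_mapsLowToHigh_le (by omega)
    _ = _ := by push_cast; rw [mul_div_assoc]; rfl
end

section
/- Let 𝒫 be a set of permutations with 𝒫_n = 𝒫 ∩ S_n nonempty for infinitely many n. If each nonempty 𝒫_n is a union of conjugacy classes of S_n, and the average number of fixed points f_n of the elements of 𝒫_n satisfies f_n = o(n) as n → ∞ along n with 𝒫_n nonempty, then 𝒫 is quasirandom. -/
open Filter

/-- The average number of fixed points of the members of a set `P` of permutations
of `[n]`. -/
noncomputable def avgFix {n : ℕ} (P : Finset (Equiv.Perm (Fin n))) : ℝ :=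
  (∑ φ ∈ P, (Nat.card {t : Fin n // φ t = t} : ℝ)) / (P.card : ℝ)

/-- `φ` contains the sequence `τ` (of `k` distinct elements of `[n]`) as a subsequence:
there are positions `i₁ < ⋯ < i_k` with `φ(i_j) = τ_j`. -/
def ContainsSeq {n k : ℕ} (φ : Equiv.Perm (Fin n)) (τ : Fin k → Fin n) : Prop :=
  ∃ g : Fin k → Fin n, StrictMono g ∧ ∀ j, φ (g j) = τ j

/-!
Conjugation by any `ψ ∈ S_n` permutes `𝒫_n`, so `p̃(n,τ)` is the average over `φ ∈ 𝒫_n` of the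
probability that `ψ φ ψ⁻¹`, for uniform `ψ`, contains `τ`, i.e. that the positions
`ψ (θ (ψ⁻¹ (τ j)))` of the `τ j` are increasing, where `θ = φ⁻¹`. Unless some `θ (ψ⁻¹ (τ j))`
collides with some `ψ⁻¹ (τ i)`, composing `ψ` with a permutation of the points `θ (ψ⁻¹ (τ j))`
reorders these positions arbitrarily, so their relative order is uniform among the `k!`
possibilities. A collision has probability at most `k · fix(φ) / n + k² / (n - 1)`, hence
`|p̃(n,τ) - 1/k!| ≤ k f_n / n + k² / (n - 1) → 0`.
-/

open Equiv Finset
open scoped Topology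

-- Scoped, because `open scoped Nat` turns `φ`, a binder name in the last theorem, into the totient.
section

open scoped Nat

theorem Tuple.strictMono_comp_iff_eq_sort {β : Type*} [LinearOrder β] {k : ℕ} {f : Fin k → β}
    (hf : Function.Injective f) {σ : Perm (Fin k)} : StrictMono (f ∘ σ) ↔ σ = Tuple.sort f := by
  rw [Tuple.eq_sort_iff]
  refine ⟨fun h => ⟨h.monotone, fun i j hij he => absurd (σ.injective (hf he)) hij.ne⟩,
    fun h => h.1.strictMono_of_injective (hf.comp σ.injective)⟩

theorem Finset.abs_sum_div_card_sub_le {K ι : Type*} [Field K] [LinearOrder K]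
    [IsStrictOrderedRing K] {s : Finset ι} (hs : s.Nonempty) {f g : ι → K} {c : K}
    (h : ∀ i ∈ s, |f i - c| ≤ g i) :
    |(∑ i ∈ s, f i) / #s - c| ≤ (∑ i ∈ s, g i) / #s := by
  have hcard : (0 : K) < #s := by exact_mod_cast hs.card_pos
  have hsplit : (∑ i ∈ s, f i) / #s - c = (∑ i ∈ s, (f i - c)) / #s := by
    rw [sum_sub_distrib, sum_const, nsmul_eq_mul, sub_div, mul_div_cancel_left₀ _ hcard.ne']
  rw [hsplit, abs_div, abs_of_pos hcard]
  gcongr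
  exact (abs_sum_le_sum_abs _ _).trans (sum_le_sum h)

theorem abs_add_div_sub_one_div_le {K : Type*} [Field K] [LinearOrder K] [IsStrictOrderedRing K]
    {a b c d : K} (hb : 0 ≤ b) (hbc : b ≤ c) (hd : 1 ≤ d) (hN : 0 < d * a + c) :
    |(a + b) / (d * a + c) - 1 / d| ≤ c / (d * a + c) := by
  have hc : 0 ≤ c := hb.trans hbc
  have key : (a + b) / (d * a + c) - 1 / d = (b - c / d) / (d * a + c) := by
    have hd0 : d ≠ 0 := (zero_lt_one.trans_le hd).ne'
    rw [eq_div_iff hN.ne', sub_mul, div_mul_cancel₀ _ hN.ne']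
    field_simp
    ring
  rw [key, abs_div, abs_of_pos hN]
  gcongr
  exact abs_sub_le_of_nonneg_of_le hb hbc (by positivity) (div_le_self hc hd)

variable {α : Type*}

namespace Equiv.Perm

section Counting

variable [Fintype α] [DecidableEq α]

theorem exists_eqOn_of_injOn {s : Finset α} {f : α → α} (hf : Set.InjOn f s) :
    ∃ g : Perm α, ∀ x ∈ s, g x = f x := by
  obtain ⟨g, hg⟩ := exists_equiv_extend_of_card_eq card_univ.symm (subset_univ (s.image f)) hf
  exact ⟨g.trans (subtypeUnivEquiv mem_univ), hg⟩

theorem card_filter_eqOn {s : Finset α} {f : α → α} (hf : Set.InjOn f s) :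
    #{ψ : Perm α | ∀ x ∈ s, ψ x = f x} = (Fintype.card α - #s)! := by
  obtain ⟨g, hg⟩ := exists_eqOn_of_injOn hf
  calc #{ψ : Perm α | ∀ x ∈ s, ψ x = f x} = #{ψ : Perm α | ∀ x ∈ s, ψ x = x} := by
        refine card_nbij' (g⁻¹ * ·) (g * ·) ?_ ?_ (fun ψ _ => by simp) (fun ψ _ => by simp)
        · intro ψ hψ
          simp_all [← hg]
        · intro ψ hψ
          simp_all
    _ = Fintype.card (Perm {x // x ∉ s}) := by
        rw [← Fintype.card_subtype, Fintype.card_congr (Perm.subtypeEquivSubtypePerm _)]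
        simp_rw [not_not]
    _ = (Fintype.card α - #s)! := by
        rw [Fintype.card_perm, Fintype.card_subtype_compl, Fintype.card_coe]

theorem card_filter_apply_eq (x a : α) : #{ψ : Perm α | ψ x = a} = (Fintype.card α - 1)! := by
  simpa using card_filter_eqOn (s := {x}) (f := fun _ => a) (by simp)

theorem card_filter_apply_eq_and_apply_eq {x y a b : α} (hxy : x ≠ y) (hab : a ≠ b) :
    #{ψ : Perm α | ψ x = a ∧ ψ y = b} = (Fintype.card α - 2)! := by
  have hf : Set.InjOn (fun z => if z = x then a else b) ↑({x, y} : Finset α) := by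
    simp [Set.InjOn, hxy.symm, hab, hab.symm]
  simpa [hxy.symm, card_pair hxy] using card_filter_eqOn hf

theorem card_filter_apply_eq_and_apply_eq_le (x y a b : α) :
    #{ψ : Perm α | ψ x = a ∧ ψ y = b}
      ≤ (if a = b ∧ x = y then (Fintype.card α - 1)! else 0) + (Fintype.card α - 2)! := by
  rcases eq_or_ne x y with rfl | hxy
  · rcases eq_or_ne a b with rfl | hab
    · simpa using le_add_right (card_filter_apply_eq x a).le
    · simp only [hab, false_and, if_false, zero_add]
      rw [card_eq_zero.mpr (filter_eq_empty_iff.mpr fun (ψ : Perm α) _ h =>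
        hab (h.1.symm.trans h.2))]
      exact Nat.zero_le _
  · rcases eq_or_ne a b with rfl | hab
    · simp only [hxy, and_false, if_false, zero_add]
      rw [card_eq_zero.mpr (filter_eq_empty_iff.mpr fun (ψ : Perm α) _ h =>
        hxy (ψ.injective (h.1.trans h.2.symm)))]
      exact Nat.zero_le _
    · simp [hxy, card_filter_apply_eq_and_apply_eq hxy hab]

theorem card_filter_mul_factorial_eq_sum_card_conj (P : Finset (Perm α))
    (hP : ∀ χ ∈ P, ∀ ψ : Perm α, ψ * χ * ψ⁻¹ ∈ P) (Q : Perm α → Prop) [DecidablePred Q] :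
    #(P.filter Q) * (Fintype.card α)! = ∑ χ ∈ P, #{ψ : Perm α | Q (ψ * χ * ψ⁻¹)} := by
  have hconj (ψ : Perm α) : #(P.filter fun χ => Q (ψ * χ * ψ⁻¹)) = #(P.filter Q) := by
    refine card_nbij' (ψ * · * ψ⁻¹) (ψ⁻¹ * · * ψ) ?_ ?_ ?_ ?_ <;>
      simp only [Set.MapsTo, Set.LeftInvOn, Set.RightInvOn, mem_coe, mem_filter]
    · exact fun χ h => ⟨hP χ h.1 ψ, h.2⟩
    · exact fun χ h => ⟨by simpa using hP χ h.1 ψ⁻¹, by simpa [mul_assoc] using h.2⟩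
    · intro χ _; group
    · intro χ _; group
  calc #(P.filter Q) * (Fintype.card α)!
      = ∑ ψ : Perm α, #(P.filter fun χ => Q (ψ * χ * ψ⁻¹)) := by
        simp only [hconj, sum_const, card_univ, Fintype.card_perm, smul_eq_mul, mul_comm]
    _ = ∑ χ ∈ P, #{ψ : Perm α | Q (ψ * χ * ψ⁻¹)} := by
        simp only [card_filter]
        exact sum_comm

end Counting

end Equiv.Perm

section Collision

variable (θ : Perm α) {k : ℕ} (τ : Fin k ↪ α)

def HasCollision (ψ : Perm α) : Prop := ∃ i j, θ (ψ⁻¹ (τ j)) = ψ⁻¹ (τ i)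

instance [DecidableEq α] : DecidablePred (HasCollision θ τ) := fun ψ =>
  inferInstanceAs (Decidable (∃ i j, θ (ψ⁻¹ (τ j)) = ψ⁻¹ (τ i)))

def collisionEmb (ψ : Perm α) : Fin k ↪ α := τ.trans (θ * ψ⁻¹).toEmbedding

-- Right multiplication by a permutation of the points `θ (ψ⁻¹ (τ j))`: without collisions it
-- fixes every `ψ⁻¹ (τ i)`, so it reorders the positions of `τ` in `ψ θ ψ⁻¹` by `σ`.
noncomputable def reorder (ψ : Perm α) (σ : Perm (Fin k)) : Perm α :=
  ψ * Perm.viaEmbeddingHom (collisionEmb θ τ ψ) σ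

section Reorder

variable {θ τ} {ψ : Perm α}

theorem reorder_one (ψ : Perm α) : reorder θ τ ψ 1 = ψ := by
  rw [reorder, map_one, mul_one]

theorem reorder_inv_apply (hψ : ¬HasCollision θ τ ψ) (σ : Perm (Fin k)) (i : Fin k) :
    (reorder θ τ ψ σ)⁻¹ (τ i) = ψ⁻¹ (τ i) := by
  rw [reorder, mul_inv_rev, Perm.mul_apply, ← map_inv, Perm.viaEmbeddingHom_apply,
    Perm.viaEmbedding_apply_of_notMem]
  rintro ⟨j, hj⟩
  exact hψ ⟨i, j, hj⟩

theorem collisionEmb_reorder (hψ : ¬HasCollision θ τ ψ) (σ : Perm (Fin k)) :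
    collisionEmb θ τ (reorder θ τ ψ σ) = collisionEmb θ τ ψ := by
  ext j
  simp only [collisionEmb, Function.Embedding.trans_apply, Equiv.coe_toEmbedding, Perm.mul_apply,
    reorder_inv_apply hψ]

theorem not_hasCollision_reorder (hψ : ¬HasCollision θ τ ψ) (σ : Perm (Fin k)) :
    ¬HasCollision θ τ (reorder θ τ ψ σ) := by
  simpa only [HasCollision, reorder_inv_apply hψ] using hψ

theorem reorder_reorder (hψ : ¬HasCollision θ τ ψ) (σ σ' : Perm (Fin k)) :
    reorder θ τ (reorder θ τ ψ σ) σ' = reorder θ τ ψ (σ * σ') := by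
  rw [reorder, collisionEmb_reorder hψ, reorder, reorder, map_mul, mul_assoc]

theorem conj_reorder_comp (hψ : ¬HasCollision θ τ ψ) (σ : Perm (Fin k)) :
    ⇑(reorder θ τ ψ σ * θ * (reorder θ τ ψ σ)⁻¹) ∘ τ = ⇑(ψ * θ * ψ⁻¹) ∘ τ ∘ σ := by
  funext j
  simp only [Function.comp_apply]
  rw [Perm.mul_apply, Perm.mul_apply, reorder_inv_apply hψ, reorder, Perm.mul_apply,
    Perm.viaEmbeddingHom_apply]
  exact congrArg ψ (Perm.viaEmbedding_apply _ (collisionEmb θ τ ψ) j)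

end Reorder

theorem card_filter_hasCollision_le [Fintype α] [DecidableEq α] :
    #{ψ | HasCollision θ τ ψ} ≤ k * #{x | θ x = x} * (Fintype.card α - 1)!
      + k ^ 2 * Fintype.card α * (Fintype.card α - 2)! := by
  have hsub : ({ψ | HasCollision θ τ ψ} : Finset (Perm α)) ⊆
      (univ : Finset (Fin k × Fin k × α)).biUnion
        fun p => {ψ : Perm α | ψ p.2.2 = τ p.2.1 ∧ ψ (θ p.2.2) = τ p.1} := by
    intro ψ hψ
    obtain ⟨i, j, hij⟩ := (mem_filter.mp hψ).2
    simp only [mem_biUnion, mem_univ, mem_filter, true_and]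
    exact ⟨(i, j, ψ⁻¹ (τ j)), ψ.apply_symm_apply _, by rw [hij]; exact ψ.apply_symm_apply _⟩
  calc #{ψ | HasCollision θ τ ψ}
      ≤ ∑ p : Fin k × Fin k × α, #{ψ : Perm α | ψ p.2.2 = τ p.2.1 ∧ ψ (θ p.2.2) = τ p.1} :=
        (card_le_card hsub).trans card_biUnion_le
    _ ≤ ∑ p : Fin k × Fin k × α,
          ((if τ p.2.1 = τ p.1 ∧ p.2.2 = θ p.2.2 then (Fintype.card α - 1)! else 0)
            + (Fintype.card α - 2)!) :=
        sum_le_sum fun p _ => Perm.card_filter_apply_eq_and_apply_eq_le _ _ _ _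
    _ = _ := by
        simp only [sum_add_distrib, Fintype.sum_prod_type, ite_and, τ.injective.eq_iff,
          sum_ite_irrel, sum_const_zero, sum_ite_eq', mem_univ, if_true]
        simp only [← sum_filter, sum_const, card_univ, Fintype.card_fin, smul_eq_mul,
          eq_comm (a := θ _)]
        ring

theorem card_filter_hasCollision_div_le [Fintype α] [DecidableEq α] (hα : 2 ≤ Fintype.card α) :
    (#{ψ | HasCollision θ τ ψ} : ℝ) / (Fintype.card α)!
      ≤ k * #{x | θ x = x} / Fintype.card α + k ^ 2 / (Fintype.card α - 1) := by
  obtain ⟨m, hm⟩ : ∃ m, Fintype.card α = m + 2 := ⟨_, (Nat.sub_add_cancel hα).symm⟩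
  have hle := card_filter_hasCollision_le θ τ
  rw [hm] at hle ⊢
  rw [div_le_iff₀ (by positivity)]
  calc (#{ψ | HasCollision θ τ ψ} : ℝ)
      ≤ k * #{x | θ x = x} * (m + 1)! + k ^ 2 * (m + 2) * m ! := by exact_mod_cast hle
    _ = _ := by
        rw [show ((m + 2 : ℕ) : ℝ) - 1 = m + 1 by push_cast; ring]
        push_cast [Nat.factorial_succ]
        field_simp
        ring

section Order

variable [Fintype α] [LinearOrder α]

theorem card_filter_strictMono_comp_perm (σ : Perm (Fin k)) :
    #{ψ : Perm α | ¬HasCollision θ τ ψ ∧ StrictMono (⇑(ψ * θ * ψ⁻¹) ∘ τ ∘ σ)} =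
      #{ψ : Perm α | ¬HasCollision θ τ ψ ∧ StrictMono (⇑(ψ * θ * ψ⁻¹) ∘ τ)} := by
  refine card_nbij' (reorder θ τ · σ) (reorder θ τ · σ⁻¹) ?_ ?_ ?_ ?_ <;>
    simp only [Set.MapsTo, Set.LeftInvOn, Set.RightInvOn, mem_coe, mem_filter, mem_univ, true_and]
  · rintro ψ ⟨hψ, hmono⟩
    exact ⟨not_hasCollision_reorder hψ σ, by rwa [conj_reorder_comp hψ]⟩
  · rintro ψ ⟨hψ, hmono⟩
    refine ⟨not_hasCollision_reorder hψ σ⁻¹, ?_⟩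
    rwa [← Function.comp_assoc, conj_reorder_comp hψ, Function.comp_assoc, Function.comp_assoc,
      ← Perm.coe_mul, inv_mul_cancel, Perm.coe_one, Function.comp_id]
  · rintro ψ ⟨hψ, -⟩
    rw [reorder_reorder hψ, mul_inv_cancel, reorder_one]
  · rintro ψ ⟨hψ, -⟩
    rw [reorder_reorder hψ, inv_mul_cancel, reorder_one]

theorem factorial_mul_card_filter_not_hasCollision_strictMono :
    k ! * #{ψ : Perm α | ¬HasCollision θ τ ψ ∧ StrictMono (⇑(ψ * θ * ψ⁻¹) ∘ τ)} =
      #{ψ : Perm α | ¬HasCollision θ τ ψ} := by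
  have hinj (ψ : Perm α) : Function.Injective (⇑(ψ * θ * ψ⁻¹) ∘ τ) :=
    (ψ * θ * ψ⁻¹).injective.comp τ.injective
  calc k ! * #{ψ : Perm α | ¬HasCollision θ τ ψ ∧ StrictMono (⇑(ψ * θ * ψ⁻¹) ∘ τ)}
      = ∑ σ : Perm (Fin k),
          #{ψ : Perm α | ¬HasCollision θ τ ψ ∧ StrictMono (⇑(ψ * θ * ψ⁻¹) ∘ τ ∘ σ)} := by
        simp only [card_filter_strictMono_comp_perm, sum_const, card_univ, Fintype.card_perm,
          Fintype.card_fin, smul_eq_mul]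
    _ = ∑ σ : Perm (Fin k), #(({ψ | ¬HasCollision θ τ ψ} : Finset (Perm α)).filter
          fun ψ => Tuple.sort (⇑(ψ * θ * ψ⁻¹) ∘ τ) = σ) := by
        refine sum_congr rfl fun σ _ => congrArg card ?_
        ext ψ
        simp only [mem_filter, mem_univ, true_and, ← Function.comp_assoc,
          Tuple.strictMono_comp_iff_eq_sort (hinj ψ), eq_comm]
    _ = #{ψ : Perm α | ¬HasCollision θ τ ψ} :=
        (card_eq_sum_card_fiberwise fun _ _ => mem_univ _).symm

theorem abs_card_filter_strictMono_div_sub_le_card_hasCollision :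
    |(#{ψ : Perm α | StrictMono (⇑(ψ * θ * ψ⁻¹) ∘ τ)} : ℝ) / (Fintype.card α)! - 1 / k !|
      ≤ #{ψ | HasCollision θ τ ψ} / (Fintype.card α)! := by
  have htotal : k ! * #{ψ : Perm α | ¬HasCollision θ τ ψ ∧ StrictMono (⇑(ψ * θ * ψ⁻¹) ∘ τ)}
      + #{ψ | HasCollision θ τ ψ} = (Fintype.card α)! := by
    rw [factorial_mul_card_filter_not_hasCollision_strictMono, add_comm,
      card_filter_add_card_filter_not, card_univ, Fintype.card_perm]
  have hsplit : #{ψ : Perm α | ¬HasCollision θ τ ψ ∧ StrictMono (⇑(ψ * θ * ψ⁻¹) ∘ τ)}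
      + #{ψ : Perm α | HasCollision θ τ ψ ∧ StrictMono (⇑(ψ * θ * ψ⁻¹) ∘ τ)}
      = #{ψ : Perm α | StrictMono (⇑(ψ * θ * ψ⁻¹) ∘ τ)} := by
    rw [← card_filter_add_card_filter_not (s := {ψ : Perm α | StrictMono (⇑(ψ * θ * ψ⁻¹) ∘ τ)})
      (HasCollision θ τ), filter_filter, filter_filter, add_comm]
    congr 2 <;> ext ψ <;> simp only [mem_filter, mem_univ, true_and, and_comm]
  have hB : #{ψ : Perm α | HasCollision θ τ ψ ∧ StrictMono (⇑(ψ * θ * ψ⁻¹) ∘ τ)}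
      ≤ #{ψ | HasCollision θ τ ψ} := card_le_card (monotone_filter_right _ fun _ _ => And.left)
  have hN : (0 : ℝ) < (Fintype.card α)! := by positivity
  rw [← htotal] at hN
  rw [← hsplit, ← htotal]
  push_cast at hN ⊢
  exact abs_add_div_sub_one_div_le (by positivity) (by exact_mod_cast hB)
    (by exact_mod_cast k.factorial_pos) hN

theorem abs_card_filter_strictMono_div_sub_le (hα : 2 ≤ Fintype.card α) :
    |(#{ψ : Perm α | StrictMono (⇑(ψ * θ * ψ⁻¹) ∘ τ)} : ℝ) / (Fintype.card α)! - 1 / k !|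
      ≤ k * #{x | θ x = x} / Fintype.card α + k ^ 2 / (Fintype.card α - 1) :=
  (abs_card_filter_strictMono_div_sub_le_card_hasCollision θ τ).trans
    (card_filter_hasCollision_div_le θ τ hα)

end Order

end Collision

theorem containsSeq_iff_strictMono {n k : ℕ} (χ : Perm (Fin n)) (τ : Fin k → Fin n) :
    ContainsSeq χ τ ↔ StrictMono (⇑χ⁻¹ ∘ τ) := by
  refine ⟨fun ⟨g, hg, hgτ⟩ => ?_, fun h => ⟨_, h, fun j => χ.apply_symm_apply _⟩⟩
  convert hg using 1
  funext j
  simp [← hgτ]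

theorem abs_card_filter_containsSeq_conj_div_sub_le {n k : ℕ} (χ : Perm (Fin n))
    (τ : Fin k ↪ Fin n) [DecidablePred (ContainsSeq · τ)] (hn : 2 ≤ n) :
    |(#{ψ : Perm (Fin n) | ContainsSeq (ψ * χ * ψ⁻¹) τ} : ℝ) / (n ! : ℝ) - 1 / k !|
      ≤ k * #{t | χ t = t} / n + k ^ 2 / (n - 1) := by
  have hcontains : #{ψ : Perm (Fin n) | ContainsSeq (ψ * χ * ψ⁻¹) τ}
      = #{ψ : Perm (Fin n) | StrictMono (⇑(ψ * χ⁻¹ * ψ⁻¹) ∘ τ)} := by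
    congr 1
    ext ψ
    simp only [mem_filter, mem_univ, true_and, containsSeq_iff_strictMono, mul_inv_rev, inv_inv,
      mul_assoc]
  have hfix : #{t | χ⁻¹ t = t} = #{t | χ t = t} := by
    congr 1
    ext t
    simp only [mem_filter, mem_univ, true_and, Perm.inv_eq_iff_eq]
    exact eq_comm
  simpa only [hcontains, hfix, Fintype.card_fin] using
    abs_card_filter_strictMono_div_sub_le χ⁻¹ τ (by simpa using hn)

theorem abs_card_filter_containsSeq_div_sub_le {n k : ℕ} (P : Finset (Perm (Fin n)))
    (hP : P.Nonempty) (hconj : ∀ χ ∈ P, ∀ ψ : Perm (Fin n), ψ * χ * ψ⁻¹ ∈ P) (hn : 2 ≤ n)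
    (τ : Fin k ↪ Fin n) [DecidablePred (ContainsSeq · τ)] :
    |(#(P.filter (ContainsSeq · τ)) : ℝ) / #P - 1 / k !|
      ≤ k * (avgFix P / n) + k ^ 2 / (n - 1) := by
  have hcount : (#(P.filter (ContainsSeq · τ)) : ℝ)
      = ∑ χ ∈ P, (#{ψ : Perm (Fin n) | ContainsSeq (ψ * χ * ψ⁻¹) τ} : ℝ) / n ! := by
    rw [← sum_div, eq_div_iff (by positivity)]
    exact_mod_cast Fintype.card_fin n ▸ Perm.card_filter_mul_factorial_eq_sum_card_conj P hconj _
  calc |(#(P.filter (ContainsSeq · τ)) : ℝ) / #P - 1 / k !|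
      ≤ (∑ χ ∈ P, (k * #{t | χ t = t} / n + k ^ 2 / (n - 1) : ℝ)) / #P := by
        rw [hcount]
        exact abs_sum_div_card_sub_le hP fun χ _ =>
          abs_card_filter_containsSeq_conj_div_sub_le χ τ hn
    _ = k * (avgFix P / n) + k ^ 2 / (n - 1) := by
        have hP' : (0 : ℝ) < #P := by exact_mod_cast hP.card_pos
        simp only [avgFix, Nat.card_eq_fintype_card, Fintype.card_subtype]
        rw [sum_add_distrib, sum_const, nsmul_eq_mul, ← sum_div, ← mul_sum]
        field_simp

end

theorem quasirandom_of_conjClosed_of_avgFix_littleO_general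
    (P : (n : ℕ) → Finset (Equiv.Perm (Fin n)))
    (hconj : ∀ n : ℕ, ∀ φ ∈ P n, ∀ ψ : Equiv.Perm (Fin n), ψ * φ * ψ⁻¹ ∈ P n)
    (havg : Tendsto (fun n : ℕ => avgFix (P n) / (n : ℝ))
      (atTop ⊓ Filter.principal {n : ℕ | (P n).Nonempty}) (nhds 0)) :
    ∀ k : ℕ, 1 ≤ k → ∀ ε : ℝ, 0 < ε →
      ∀ᶠ n in atTop ⊓ Filter.principal {n : ℕ | (P n).Nonempty},
        ∀ τ : Fin k → Fin n, Function.Injective τ →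
          |(Nat.card {φ : Equiv.Perm (Fin n) // φ ∈ P n ∧ ContainsSeq φ τ} : ℝ) /
              ((P n).card : ℝ) - 1 / (Nat.factorial k : ℝ)| < ε := by
  classical
  intro k _ ε hε
  have hbound : Tendsto (fun n : ℕ => k * (avgFix (P n) / n) + (k : ℝ) ^ 2 / (n - 1))
      (atTop ⊓ Filter.principal {n : ℕ | (P n).Nonempty}) (𝓝 0) := by
    have hlin : Tendsto (fun n : ℕ => (n : ℝ) - 1) atTop atTop :=
      tendsto_atTop_add_const_right _ (-1) tendsto_natCast_atTop_atTop
    simpa using (havg.const_mul (k : ℝ)).add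
      ((tendsto_const_nhds.div_atTop hlin).mono_left inf_le_left)
  filter_upwards [hbound.eventually (gt_mem_nhds hε),
    (eventually_ge_atTop 2).filter_mono inf_le_left, eventually_inf_principal.mpr
      (Eventually.of_forall fun n hn => hn)] with n hlt hn hne τ hτ
  rw [Nat.card_eq_fintype_card, Fintype.card_subtype, ← filter_filter, filter_mem_eq_inter,
    univ_inter]
  exact (abs_card_filter_containsSeq_div_sub_le (P n) hne (hconj n) hn ⟨τ, hτ⟩).trans_lt hlt

/-- Let `𝒫` be a set of permutations with `𝒫_n = 𝒫 ∩ S_n` nonempty for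
infinitely many `n`.  If each `𝒫_n` is a union of conjugacy classes of `S_n` and the
average number `f_n` of fixed points of the elements of `𝒫_n` is `o(n)` (along the `n`
with `𝒫_n` nonempty), then `𝒫` is quasirandom: for every `k ≥ 1`,
`max_τ |p̃(n,τ) − 1/k!| → 0` along the `n` with `𝒫_n` nonempty, where `τ` ranges over
sequences of `k` distinct elements of `[n]` and `p̃(n,τ) = h(n,τ)/|𝒫_n|` with `h(n,τ)`
the number of members of `𝒫_n` containing `τ` as a subsequence. -/
theorem quasirandom_of_conjClosed_of_avgFix_littleO
    (P : (n : ℕ) → Finset (Equiv.Perm (Fin n)))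
    (hinf : {n : ℕ | (P n).Nonempty}.Infinite)
    (hconj : ∀ n : ℕ, ∀ φ ∈ P n, ∀ ψ : Equiv.Perm (Fin n), ψ * φ * ψ⁻¹ ∈ P n)
    (havg : Tendsto (fun n : ℕ => avgFix (P n) / (n : ℝ))
      (atTop ⊓ Filter.principal {n : ℕ | (P n).Nonempty}) (nhds 0)) :
    ∀ k : ℕ, 1 ≤ k → ∀ ε : ℝ, 0 < ε →
      ∀ᶠ n in atTop ⊓ Filter.principal {n : ℕ | (P n).Nonempty},
        ∀ τ : Fin k → Fin n, Function.Injective τ →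
          |(Nat.card {φ : Equiv.Perm (Fin n) // φ ∈ P n ∧ ContainsSeq φ τ} : ℝ) /
              ((P n).card : ℝ) - 1 / (Nat.factorial k : ℝ)| < ε :=
  quasirandom_of_conjClosed_of_avgFix_littleO_general P hconj havg
end

section
/- Let 𝒫_n be a nonempty subset of S_n (n ≥ 2) that is a union of conjugacy classes, with average number of fixed points f_n, and let I ⊆ [n] with |I| = k. Then the number of φ ∈ 𝒫_n with φ(I) ∩ I ≠ ∅ is at most |𝒫_n| · k·(n(k−1)+f_n(n−k))/(n(n−1)). -/
open Finset Equiv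

lemma avgFix_mul_card {n : ℕ} (P : Finset (Perm (Fin n))) :
    avgFix P * #P = ∑ φ ∈ P, (Nat.card {t : Fin n // φ t = t} : ℝ) := by
  rcases P.eq_empty_or_nonempty with rfl | hP
  · simp
  · exact div_mul_cancel₀ _ (Nat.cast_ne_zero.mpr hP.card_pos.ne')

namespace Equiv.Perm

variable {α : Type*} [DecidableEq α]

lemma exists_apply_eq_and_apply_eq {a b c d : α} (hab : a ≠ b) (hcd : c ≠ d) :
    ∃ ψ : Perm α, ψ a = c ∧ ψ b = d := by
  have hbc : swap a c b ≠ c := fun h =>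
    hab ((swap a c).injective (h.trans (swap_apply_left a c).symm)).symm
  refine ⟨swap (swap a c b) d * swap a c, ?_, swap_apply_left _ _⟩
  rw [Perm.mul_apply, swap_apply_left, swap_apply_of_ne_of_ne hbc.symm hcd]

def transitionCount (P : Finset (Perm α)) (t s : α) : ℕ := #{φ ∈ P | φ t = s}

section ConjClosed

variable {P : Finset (Perm α)} (hP : ∀ φ ∈ P, ∀ ψ : Perm α, ψ * φ * ψ⁻¹ ∈ P)
include hP

lemma transitionCount_conj (ψ : Perm α) (t s : α) :
    transitionCount P (ψ t) (ψ s) = transitionCount P t s := by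
  refine card_bij' (fun φ _ => ψ⁻¹ * φ * ψ) (fun φ _ => ψ * φ * ψ⁻¹) ?_ ?_ ?_ ?_
  · intro φ hφ
    simp only [mem_filter] at hφ ⊢
    refine ⟨by simpa using hP φ hφ.1 ψ⁻¹, ?_⟩
    simp [Perm.mul_apply, hφ.2]
  · intro φ hφ
    simp only [mem_filter] at hφ ⊢
    exact ⟨hP φ hφ.1 ψ, by simp [Perm.mul_apply, hφ.2]⟩
  · intro φ _; group
  · intro φ _; group

lemma transitionCount_self_eq (t u : α) : transitionCount P t t = transitionCount P u u := by
  simpa using (transitionCount_conj hP (swap t u) t t).symm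

lemma transitionCount_eq_of_ne {t s u v : α} (hts : t ≠ s) (huv : u ≠ v) :
    transitionCount P t s = transitionCount P u v := by
  obtain ⟨ψ, rfl, rfl⟩ := exists_apply_eq_and_apply_eq hts huv
  exact (transitionCount_conj hP ψ t s).symm

lemma sum_transitionCount_of_mem {S : Finset α} {t : α} (ht : t ∈ S) {o l : α} (hol : o ≠ l) :
    (∑ s ∈ S, transitionCount P t s : ℝ) =
      transitionCount P o o + (#S - 1 : ℝ) * transitionCount P o l := by
  rw [← sum_erase_add S _ ht, transitionCount_self_eq hP t o,
    sum_congr rfl fun s hs => by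
      rw [transitionCount_eq_of_ne hP (ne_of_mem_erase hs).symm hol],
    sum_const, card_erase_of_mem ht, nsmul_eq_mul, Nat.cast_pred (card_pos.mpr ⟨t, ht⟩)]
  ring

end ConjClosed

lemma sum_transitionCount [Fintype α] (P : Finset (Perm α)) (t : α) :
    ∑ s, transitionCount P t s = #P :=
  (card_eq_sum_card_fiberwise fun φ _ => mem_univ (φ t)).symm

lemma sum_transitionCount_self [Fintype α] (P : Finset (Perm α)) :
    ∑ t, transitionCount P t t = ∑ φ ∈ P, Nat.card {t : α // φ t = t} := by
  simp only [transitionCount, card_filter, Nat.card_eq_fintype_card, Fintype.card_subtype]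
  exact sum_comm

lemma natCard_exists_apply_mem_le (P : Finset (Perm α)) (I : Finset α) :
    Nat.card {φ // φ ∈ P ∧ ∃ t ∈ I, φ t ∈ I} ≤ ∑ t ∈ I, ∑ s ∈ I, transitionCount P t s := by
  classical
  have hrow (t : α) : #{φ ∈ P | φ t ∈ I} = ∑ s ∈ I, transitionCount P t s := by
    rw [card_eq_sum_card_fiberwise (s := {φ ∈ P | φ t ∈ I}) (t := I)
      (f := fun φ : Perm α => φ t) fun φ hφ => (mem_filter.mp hφ).2]
    refine sum_congr rfl fun s hs => congrArg card ?_
    rw [filter_filter]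
    exact filter_congr fun φ _ => ⟨And.right, fun h => ⟨h ▸ hs, h⟩⟩
  calc Nat.card {φ // φ ∈ P ∧ ∃ t ∈ I, φ t ∈ I}
      = #{φ ∈ P | ∃ t ∈ I, φ t ∈ I} := by
        rw [← Nat.card_eq_finsetCard]
        exact Nat.card_congr (Equiv.subtypeEquivRight fun φ => by simp)
    _ ≤ #(I.biUnion fun t => {φ ∈ P | φ t ∈ I}) := card_le_card fun φ hφ => by
        obtain ⟨hφP, t, ht, hφt⟩ := mem_filter.mp hφ
        exact mem_biUnion.mpr ⟨t, ht, mem_filter.mpr ⟨hφP, hφt⟩⟩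
    _ ≤ ∑ t ∈ I, #{φ ∈ P | φ t ∈ I} := card_biUnion_le
    _ = ∑ t ∈ I, ∑ s ∈ I, transitionCount P t s := sum_congr rfl fun t _ => hrow t

end Equiv.Perm

open Equiv.Perm

theorem conjClosed_hit_set_bound_general (n k : ℕ) (hn : 2 ≤ n)
    (P : Finset (Equiv.Perm (Fin n)))
    (hconj : ∀ φ ∈ P, ∀ ψ : Equiv.Perm (Fin n), ψ * φ * ψ⁻¹ ∈ P)
    (I : Finset (Fin n)) (hI : I.card = k) :
    (Nat.card {φ : Equiv.Perm (Fin n) // φ ∈ P ∧ ∃ t ∈ I, φ t ∈ I} : ℝ) ≤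
      (P.card : ℝ) *
        ((k : ℝ) * (((n : ℝ) * ((k : ℝ) - 1) + avgFix P * ((n : ℝ) - (k : ℝ))) /
          ((n : ℝ) * ((n : ℝ) - 1)))) := by
  let o : Fin n := ⟨0, by omega⟩
  let l : Fin n := ⟨1, by omega⟩
  have hol : o ≠ l := by simp [o, l, Fin.ext_iff]
  set A : ℝ := ↑(transitionCount P o o)
  set B : ℝ := ↑(transitionCount P o l)
  have hcard : (#P : ℝ) = A + (n - 1) * B := by
    rw [← sum_transitionCount P o, Nat.cast_sum,
      sum_transitionCount_of_mem hconj (mem_univ o) hol, card_univ, Fintype.card_fin]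
  have hfix : avgFix P * #P = n * A := by
    rw [avgFix_mul_card, ← Nat.cast_sum, ← sum_transitionCount_self, Nat.cast_sum,
      sum_congr rfl fun t _ => by rw [transitionCount_self_eq hconj t o]]
    simp [A]
  have hhit : (Nat.card {φ // φ ∈ P ∧ ∃ t ∈ I, φ t ∈ I} : ℝ) ≤ k * (A + (k - 1) * B) := by
    calc _ ≤ (∑ t ∈ I, ∑ s ∈ I, transitionCount P t s : ℝ) := by
          exact_mod_cast natCard_exists_apply_mem_le P I
      _ = k * (A + (k - 1) * B) := by
          rw [sum_congr rfl fun t ht => sum_transitionCount_of_mem hconj ht hol, sum_const, hI,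
            nsmul_eq_mul]
  have hn2 : (2 : ℝ) ≤ n := by exact_mod_cast hn
  have hn0 : (n : ℝ) ≠ 0 := by linarith
  have hn1 : (n : ℝ) - 1 ≠ 0 := by linarith
  refine hhit.trans_eq ?_
  field_simp
  linear_combination (-k * (n - k) : ℝ) * hfix - (k * n * (k - 1) : ℝ) * hcard

/-- Let `𝒫_n` be a nonempty subset of `S_n` (`n ≥ 2`) closed under
conjugation, with average number of fixed points `f_n`, and `I ⊆ [n]` with `|I| = k`.
Then the number of `φ ∈ 𝒫_n` with `φ(I) ∩ I ≠ ∅` is at most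
`|𝒫_n| · k·(n(k−1)+f_n(n−k))/(n(n−1))`. -/
theorem conjClosed_hit_set_bound (n k : ℕ) (hn : 2 ≤ n)
    (P : Finset (Equiv.Perm (Fin n))) (hne : P.Nonempty)
    (hconj : ∀ φ ∈ P, ∀ ψ : Equiv.Perm (Fin n), ψ * φ * ψ⁻¹ ∈ P)
    (I : Finset (Fin n)) (hI : I.card = k) :
    (Nat.card {φ : Equiv.Perm (Fin n) // φ ∈ P ∧ ∃ t ∈ I, φ t ∈ I} : ℝ) ≤
      (P.card : ℝ) *
        ((k : ℝ) * (((n : ℝ) * ((k : ℝ) - 1) + avgFix P * ((n : ℝ) - (k : ℝ))) /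
          ((n : ℝ) * ((n : ℝ) - 1)))) :=
  conjClosed_hit_set_bound_general n k hn P hconj I hI
end

section
/- Let 𝒫_n ⊆ S_n be a union of conjugacy classes, let I ⊆ [n] with |I| = k, and for a permutation τ of I (regarded as a sequence, i.e., an ordering of the elements of I) set B(τ) = {φ ∈ 𝒫_n : φ(I) ∩ I = ∅ and φ contains τ as a subsequence}. Then for any two orderings τ₁, τ₂ of I, |B(τ₁)| = |B(τ₂)|. -/
open Equiv Function

theorem Equiv.Perm.exists_comp_eq_of_range_eq {α ι : Type*} {τ₁ τ₂ : ι → α}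
    (h₁ : Injective τ₁) (h₂ : Injective τ₂) (hr : Set.range τ₁ = Set.range τ₂) :
    ∃ σ : Perm α, (∀ x, σ x ∈ Set.range τ₁ ↔ x ∈ Set.range τ₁) ∧
      (∀ x ∉ Set.range τ₁, σ x = x) ∧ σ ∘ τ₁ = τ₂ := by
  classical
  let π : Perm (Set.range τ₁) := (Equiv.ofInjective τ₁ h₁).symm.trans
    ((Equiv.ofInjective τ₂ h₂).trans (Equiv.setCongr hr.symm))
  refine ⟨Perm.ofSubtype π, Perm.ofSubtype_apply_mem_iff_mem π,
    fun x hx => Perm.ofSubtype_apply_of_not_mem π hx, funext fun j => ?_⟩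
  simp [Perm.ofSubtype_apply_of_mem π (Set.mem_range_self j), π]

theorem ContainsSeq.conj {n k : ℕ} {φ σ : Perm (Fin n)} {τ : Fin k → Fin n}
    (h : ContainsSeq φ τ) (hσ : ∀ i, φ i ∈ Set.range τ → σ i = i) :
    ContainsSeq (σ * φ * σ⁻¹) (σ ∘ τ) := by
  obtain ⟨g, hg, hgτ⟩ := h
  refine ⟨g, hg, fun j => ?_⟩
  have hfix : σ⁻¹ (g j) = g j := Perm.inv_eq_iff_eq.mpr (hσ _ ⟨j, (hgτ j).symm⟩).symm
  show σ (φ (σ⁻¹ (g j))) = σ (τ j)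
  rw [hfix, hgτ]

theorem Equiv.Perm.conj_apply_notMem {α : Type*} {s : Set α} {φ σ : Perm α}
    (hσ : ∀ x, σ x ∈ s ↔ x ∈ s) (hφ : ∀ t ∈ s, φ t ∉ s) :
    ∀ t ∈ s, (σ * φ * σ⁻¹) t ∉ s := by
  intro t ht
  have ht' : σ⁻¹ t ∈ s := (hσ _).mp (by simpa using ht)
  simpa [hσ] using hφ _ ht'

theorem card_B_le {n k : ℕ} (P : Finset (Perm (Fin n)))
    (hconj : ∀ φ ∈ P, ∀ ψ : Perm (Fin n), ψ * φ * ψ⁻¹ ∈ P)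
    (I : Finset (Fin n)) {τ₁ τ₂ : Fin k → Fin n} (hτ₁ : Injective τ₁) (hτ₂ : Injective τ₂)
    (hτ₁I : Set.range τ₁ = I) (hτ₂I : Set.range τ₂ = I) :
    Nat.card {φ : Perm (Fin n) // φ ∈ P ∧ (∀ t ∈ I, φ t ∉ I) ∧ ContainsSeq φ τ₁} ≤
      Nat.card {φ : Perm (Fin n) // φ ∈ P ∧ (∀ t ∈ I, φ t ∉ I) ∧ ContainsSeq φ τ₂} := by
  obtain ⟨σ, hσI, hσfix, hστ⟩ :=
    Perm.exists_comp_eq_of_range_eq hτ₁ hτ₂ (hτ₁I.trans hτ₂I.symm)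
  rw [hτ₁I] at hσI hσfix
  refine Nat.card_le_card_of_injective (fun φ => ⟨σ * φ * σ⁻¹, ?_⟩) fun φ ψ h => ?_
  · obtain ⟨hP, hφI, hseq⟩ := φ.2
    refine ⟨hconj _ hP σ, fun t ht => Perm.conj_apply_notMem (s := I) hσI hφI t ht,
      hστ ▸ hseq.conj fun i hi => hσfix i fun hiI => hφI i hiI ?_⟩
    rwa [hτ₁I] at hi
  · exact Subtype.ext ((MulAut.conj σ).injective (congrArg Subtype.val h))

theorem conjClosed_B_card_eq_general (n k : ℕ) (P : Finset (Equiv.Perm (Fin n)))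
    (hconj : ∀ φ ∈ P, ∀ ψ : Equiv.Perm (Fin n), ψ * φ * ψ⁻¹ ∈ P)
    (I : Finset (Fin n))
    (τ₁ τ₂ : Fin k → Fin n)
    (hτ₁ : Function.Injective τ₁) (hτ₁I : ∀ x : Fin n, x ∈ I ↔ ∃ j, τ₁ j = x)
    (hτ₂ : Function.Injective τ₂) (hτ₂I : ∀ x : Fin n, x ∈ I ↔ ∃ j, τ₂ j = x) :
    Nat.card {φ : Equiv.Perm (Fin n) //
        φ ∈ P ∧ (∀ t ∈ I, φ t ∉ I) ∧ ContainsSeq φ τ₁} =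
      Nat.card {φ : Equiv.Perm (Fin n) //
        φ ∈ P ∧ (∀ t ∈ I, φ t ∉ I) ∧ ContainsSeq φ τ₂} := by
  have hr₁ : Set.range τ₁ = I := Set.ext fun x => (hτ₁I x).symm
  have hr₂ : Set.range τ₂ = I := Set.ext fun x => (hτ₂I x).symm
  exact le_antisymm (card_B_le P hconj I hτ₁ hτ₂ hr₁ hr₂) (card_B_le P hconj I hτ₂ hτ₁ hr₂ hr₁)

/-- Let `𝒫_n ⊆ S_n` be a union of conjugacy classes, `I ⊆ [n]` with
`|I| = k`, and for an ordering `τ` of the elements of `I` let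
`B(τ) = {φ ∈ 𝒫_n : φ(I) ∩ I = ∅ and φ contains τ as a subsequence}`.  Then for any two
orderings `τ₁, τ₂` of `I`, `|B(τ₁)| = |B(τ₂)|`. -/
theorem conjClosed_B_card_eq (n k : ℕ) (P : Finset (Equiv.Perm (Fin n)))
    (hconj : ∀ φ ∈ P, ∀ ψ : Equiv.Perm (Fin n), ψ * φ * ψ⁻¹ ∈ P)
    (I : Finset (Fin n)) (hI : I.card = k)
    (τ₁ τ₂ : Fin k → Fin n)
    (hτ₁ : Function.Injective τ₁) (hτ₁I : ∀ x : Fin n, x ∈ I ↔ ∃ j, τ₁ j = x)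
    (hτ₂ : Function.Injective τ₂) (hτ₂I : ∀ x : Fin n, x ∈ I ↔ ∃ j, τ₂ j = x) :
    Nat.card {φ : Equiv.Perm (Fin n) //
        φ ∈ P ∧ (∀ t ∈ I, φ t ∉ I) ∧ ContainsSeq φ τ₁} =
      Nat.card {φ : Equiv.Perm (Fin n) //
        φ ∈ P ∧ (∀ t ∈ I, φ t ∉ I) ∧ ContainsSeq φ τ₂} :=
  conjClosed_B_card_eq_general n k P hconj I τ₁ τ₂ hτ₁ hτ₁I hτ₂ hτ₂I
end

section
/- For integers k ≥ 1 and n ≥ 2k, G(n,k) = G(n−1,k−1) + C(n−k,k)·t_{n−2k}, where C(n−k,k) is a binomial coefficient; that is, the number of involutions of [n] containing the subsequence 1 2 ⋯ k equals the number of involutions of [n−1] containing the subsequence 1 2 ⋯ (k−1) plus C(n−k,k) times the number of involutions of [n−2k]. -/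
/-- An involution of `[n]` (letters `1,…,n`, i.e. values `v+1` for `v : Fin n`) contains
the subsequence `1 2 ⋯ m`: the letters `1,…,m` occur at increasing positions. -/
def ContainsIdSeq {n : ℕ} (φ : Equiv.Perm (Fin n)) (m : ℕ) : Prop :=
  ∃ g : Fin m → Fin n, StrictMono g ∧ ∀ j : Fin m, (φ (g j) : ℕ) = (j : ℕ)

/-- `G(n,k)`: the number of involutions of `[n]` containing the subsequence `1 2 ⋯ k`. -/
noncomputable def G (n k : ℕ) : ℕ :=
  Nat.card {φ : Equiv.Perm (Fin n) // φ * φ = 1 ∧ ContainsIdSeq φ k}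

open Equiv Finset

set_option linter.unnecessarySimpa false

lemma card_split {α : Type*} [Fintype α] (p q : α → Prop) :
    Nat.card {x : α // p x} =
      Nat.card {x : α // p x ∧ q x} + Nat.card {x : α // p x ∧ ¬ q x} := by
  classical
  rw [← Nat.card_sum]
  refine (Nat.card_congr ?_).symm
  exact ((Equiv.sumCongr (Equiv.subtypeSubtypeEquivSubtypeInter p q)
    (Equiv.subtypeSubtypeEquivSubtypeInter p (fun a => ¬ q a))).symm.trans
    (Equiv.sumCompl (fun x : {a : α // p a} => q x.1)))

lemma invol_apply {n : ℕ} {φ : Equiv.Perm (Fin n)} (h : φ * φ = 1) (x : Fin n) :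
    φ (φ x) = x := by
  rw [← Equiv.Perm.mul_apply, h, Equiv.Perm.one_apply]

lemma invol_iff {n : ℕ} (φ : Equiv.Perm (Fin n)) :
    φ * φ = 1 ↔ ∀ x, φ (φ x) = x := by
  constructor
  · exact fun h x => invol_apply h x
  · intro h; ext x; simp [h x]

lemma contains_iff {n k : ℕ} (hkn : k ≤ n) (φ : Equiv.Perm (Fin n)) (hφ : φ * φ = 1) :
    ContainsIdSeq φ k ↔ StrictMono (fun j : Fin k => φ (Fin.castLE hkn j)) := by
  constructor
  · rintro ⟨g, hg, hval⟩
    have hgj : ∀ j, g j = φ (Fin.castLE hkn j) := by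
      intro j
      have h1 : φ (g j) = Fin.castLE hkn j := Fin.ext (hval j)
      have := congrArg φ h1
      rwa [invol_apply hφ] at this
    have : (fun j : Fin k => φ (Fin.castLE hkn j)) = g := funext fun j => (hgj j).symm
    rw [this]; exact hg
  · intro h
    exact ⟨_, h, fun j => by simp [invol_apply hφ]⟩

section Bij1

variable {m k : ℕ}

noncomputable def extPerm (ψ : Equiv.Perm (Fin m)) : Equiv.Perm (Fin (m+1)) :=
  Equiv.Perm.decomposeFin.symm (0, ψ)

lemma extPerm_zero (ψ : Equiv.Perm (Fin m)) : extPerm ψ 0 = 0 := by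
  simp [extPerm]

lemma extPerm_succ (ψ : Equiv.Perm (Fin m)) (i : Fin m) :
    extPerm ψ i.succ = (ψ i).succ := by
  simp [extPerm, Equiv.Perm.decomposeFin_symm_apply_succ]

lemma extPerm_invol_iff (ψ : Equiv.Perm (Fin m)) :
    extPerm ψ * extPerm ψ = 1 ↔ ψ * ψ = 1 := by
  rw [invol_iff, invol_iff]
  constructor
  · intro h x
    have := h x.succ
    rw [extPerm_succ, extPerm_succ] at this
    exact Fin.succ_injective _ this
  · intro h x
    induction x using Fin.cases with
    | zero => rw [extPerm_zero, extPerm_zero]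
    | succ i => rw [extPerm_succ, extPerm_succ, h i]

lemma extPerm_contains_iff (hkm : k ≤ m) (ψ : Equiv.Perm (Fin m)) (hψ : ψ * ψ = 1) :
    ContainsIdSeq (extPerm ψ) (k+1) ↔ ContainsIdSeq ψ k := by
  have hinv : extPerm ψ * extPerm ψ = 1 := (extPerm_invol_iff ψ).2 hψ
  have hk1 : k + 1 ≤ m + 1 := Nat.succ_le_succ hkm
  rw [contains_iff hk1 _ hinv, contains_iff hkm _ hψ]
  have hcs : ∀ j : Fin k, (Fin.castLE hk1 j.succ) = (Fin.castLE hkm j).succ := by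
    intro j; ext; simp
  have hc0 : (Fin.castLE hk1 (0 : Fin (k+1))) = 0 := by ext; simp
  constructor
  · intro h j1 j2 hlt
    have := h (a := j1.succ) (b := j2.succ) (Fin.succ_lt_succ_iff.mpr hlt)
    simp only [hcs, extPerm_succ] at this
    exact Fin.succ_lt_succ_iff.mp this
  · intro h j1 j2 hlt
    rcases Fin.eq_zero_or_eq_succ j2 with rfl | ⟨j2', rfl⟩
    · exact absurd hlt (Fin.not_lt_zero j1)
    rcases Fin.eq_zero_or_eq_succ j1 with rfl | ⟨j1', rfl⟩
    · simp only [hc0, hcs, extPerm_zero, extPerm_succ]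
      exact Fin.succ_pos _
    · simp only [hcs, extPerm_succ]
      refine Fin.succ_lt_succ_iff.mpr (h ?_)
      have h' : j1' < j2' := Fin.succ_lt_succ_iff.mp hlt
      show Fin.castLE hkm j1' < Fin.castLE hkm j2'
      rw [Fin.lt_def] at h' ⊢
      exact h'

lemma bij1 (hkm : k ≤ m) :
    Nat.card {φ : Equiv.Perm (Fin (m+1)) //
        (φ * φ = 1 ∧ ContainsIdSeq φ (k+1)) ∧ φ 0 = 0}
      = Nat.card {ψ : Equiv.Perm (Fin m) // ψ * ψ = 1 ∧ ContainsIdSeq ψ k} := by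
  refine (Nat.card_eq_of_bijective
    (fun x : {ψ : Equiv.Perm (Fin m) // ψ * ψ = 1 ∧ ContainsIdSeq ψ k} =>
      (⟨extPerm x.1, ⟨(extPerm_invol_iff x.1).2 x.2.1,
        (extPerm_contains_iff hkm x.1 x.2.1).2 x.2.2⟩, extPerm_zero x.1⟩ :
        {φ : Equiv.Perm (Fin (m+1)) //
          (φ * φ = 1 ∧ ContainsIdSeq φ (k+1)) ∧ φ 0 = 0})) ⟨?_, ?_⟩).symm
  · intro a b hab
    have : extPerm a.1 = extPerm b.1 := congrArg Subtype.val hab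
    have h2 : ((0 : Fin (m+1)), a.1) = ((0 : Fin (m+1)), b.1) :=
      Equiv.Perm.decomposeFin.symm.injective this
    exact Subtype.ext (congrArg Prod.snd h2)
  · rintro ⟨φ, ⟨h1, h2⟩, h0⟩
    set ψ := (Equiv.Perm.decomposeFin φ).2 with hψdef
    have heq : Equiv.Perm.decomposeFin.symm (Equiv.Perm.decomposeFin φ) = φ :=
      Equiv.symm_apply_apply _ _
    have hp : (Equiv.Perm.decomposeFin φ).1 = 0 := by
      have : φ 0 = (Equiv.Perm.decomposeFin φ).1 := by
        conv_lhs => rw [← heq]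
        rw [show (Equiv.Perm.decomposeFin φ) = ((Equiv.Perm.decomposeFin φ).1, ψ) from rfl]
        simp
      rw [← this, h0]
    have hfe : extPerm ψ = φ := by
      rw [extPerm, ← hp]
      rw [show ((Equiv.Perm.decomposeFin φ).1, ψ) = Equiv.Perm.decomposeFin φ from rfl]
      exact heq
    have hinv : ψ * ψ = 1 := (extPerm_invol_iff ψ).1 (by rw [hfe]; exact h1)
    have hcon : ContainsIdSeq ψ k :=
      (extPerm_contains_iff hkm ψ hinv).1 (by rw [hfe]; exact h2)
    exact ⟨⟨ψ, hinv, hcon⟩, Subtype.ext hfe⟩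

end Bij1

section Bij2

variable {N k d : ℕ}

/-- the "rest" positions: neither small (`< k`) nor in `T`. -/
def Rset (k : ℕ) (T : Finset (Fin (N+1))) : Finset (Fin (N+1)) :=
  univ.filter (fun x => k ≤ (x : ℕ) ∧ x ∉ T)

lemma mem_Rset {T : Finset (Fin (N+1))} {i : Fin (N+1)} :
    i ∈ Rset k T ↔ k ≤ (i : ℕ) ∧ i ∉ T := by simp [Rset]

lemma card_filter_ge (hN : N + 1 = k + (k + d)) :
    (univ.filter (fun x : Fin (N+1) => k ≤ (x : ℕ))).card = k + d := by
  have hinj : Function.Injective (fun i : Fin (k+d) => (⟨(i : ℕ) + k, by omega⟩ : Fin (N+1))) := by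
    intro a b hab
    have : (a : ℕ) + k = (b : ℕ) + k := congrArg Fin.val hab
    exact Fin.ext (by omega)
  have himg : univ.filter (fun x : Fin (N+1) => k ≤ (x : ℕ)) =
      univ.image (fun i : Fin (k+d) => (⟨(i : ℕ) + k, by omega⟩ : Fin (N+1))) := by
    ext x
    simp only [mem_filter, mem_univ, true_and, mem_image]
    constructor
    · intro hx
      exact ⟨⟨(x : ℕ) - k, by omega⟩, Fin.ext (by simp; omega)⟩
    · rintro ⟨i, rfl⟩
      simp
  rw [himg, card_image_of_injective _ hinj, card_univ, Fintype.card_fin]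

lemma Rset_card (hN : N + 1 = k + (k + d)) {T : Finset (Fin (N+1))} (hT : T.card = k)
    (hTk : ∀ x ∈ T, k ≤ (x : ℕ)) : (Rset k T).card = d := by
  have h1 : Rset k T = (univ.filter (fun x : Fin (N+1) => k ≤ (x : ℕ))) \ T := by
    ext x; simp [Rset, mem_sdiff, mem_filter]
  rw [h1, card_sdiff_of_subset (fun x hx => mem_filter.2 ⟨mem_univ x, hTk x hx⟩), hT,
    card_filter_ge hN]
  omega

noncomputable def f2 (hkn : k ≤ N + 1) (T : Finset (Fin (N+1))) (hT : T.card = k)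
    (hR : (Rset k T).card = d) (ψ : Equiv.Perm (Fin d)) : Fin (N+1) → Fin (N+1) :=
  fun i =>
    if h1 : (i : ℕ) < k then ((T.orderIsoOfFin hT) ⟨(i : ℕ), h1⟩ : Fin (N+1))
    else if h2 : i ∈ T then Fin.castLE hkn ((T.orderIsoOfFin hT).symm ⟨i, h2⟩)
    else (((Rset k T).orderIsoOfFin hR) (ψ (((Rset k T).orderIsoOfFin hR).symm
      ⟨i, mem_Rset.2 ⟨Nat.le_of_not_lt h1, h2⟩⟩)) : Fin (N+1))

variable {hkn : k ≤ N + 1} {T : Finset (Fin (N+1))} {hT : T.card = k}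
  {hR : (Rset k T).card = d} {ψ : Equiv.Perm (Fin d)}

lemma f2_apply_lt {i : Fin (N+1)} (h1 : (i : ℕ) < k) :
    f2 hkn T hT hR ψ i = ((T.orderIsoOfFin hT) ⟨(i : ℕ), h1⟩ : Fin (N+1)) := by
  simp only [f2]; rw [dif_pos h1]

lemma f2_apply_mem {i : Fin (N+1)} (h1 : ¬ (i : ℕ) < k) (h2 : i ∈ T) :
    f2 hkn T hT hR ψ i = Fin.castLE hkn ((T.orderIsoOfFin hT).symm ⟨i, h2⟩) := by
  simp only [f2]; rw [dif_neg h1, dif_pos h2]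

lemma f2_apply_R {i : Fin (N+1)} (h3 : i ∈ Rset k T) :
    f2 hkn T hT hR ψ i = (((Rset k T).orderIsoOfFin hR)
      (ψ (((Rset k T).orderIsoOfFin hR).symm ⟨i, h3⟩)) : Fin (N+1)) := by
  have h1 : ¬ (i : ℕ) < k := by
    have := (mem_Rset.1 h3).1; omega
  have h2 : i ∉ T := (mem_Rset.1 h3).2
  simp only [f2]; rw [dif_neg h1, dif_neg h2]

lemma f2_invol (hTk : ∀ x ∈ T, k ≤ (x : ℕ)) (hψ : ψ * ψ = 1) :
    Function.Involutive (f2 hkn T hT hR ψ) := by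
  intro i
  by_cases h1 : (i : ℕ) < k
  · rw [f2_apply_lt h1]
    set y := (T.orderIsoOfFin hT) ⟨(i : ℕ), h1⟩ with hy
    have hy1 : ¬ ((y : Fin (N+1)) : ℕ) < k := by
      have := hTk _ y.2; omega
    rw [f2_apply_mem hy1 y.2]
    have : (⟨(y : Fin (N+1)), y.2⟩ : {x // x ∈ T}) = y := Subtype.ext rfl
    rw [this, OrderIso.symm_apply_apply]
    exact Fin.ext rfl
  · by_cases h2 : i ∈ T
    · rw [f2_apply_mem h1 h2]
      set j := (T.orderIsoOfFin hT).symm ⟨i, h2⟩ with hj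
      have hlt : ((Fin.castLE hkn j : Fin (N+1)) : ℕ) < k := by
        simpa using j.2
      rw [f2_apply_lt hlt]
      have : (⟨((Fin.castLE hkn j : Fin (N+1)) : ℕ), hlt⟩ : Fin k) = j := Fin.ext rfl
      rw [this, hj, OrderIso.apply_symm_apply]
    · have h3 : i ∈ Rset k T := mem_Rset.2 ⟨Nat.le_of_not_lt h1, h2⟩
      rw [f2_apply_R h3]
      set ρ := (Rset k T).orderIsoOfFin hR with hρ
      set y := ρ (ψ (ρ.symm ⟨i, h3⟩)) with hy
      rw [f2_apply_R y.2]
      have : (⟨(y : Fin (N+1)), y.2⟩ : {x // x ∈ Rset k T}) = y := Subtype.ext rfl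
      rw [this, hy, OrderIso.symm_apply_apply, invol_apply hψ, OrderIso.apply_symm_apply]

end Bij2

section Bij2b

variable {N k d : ℕ}

noncomputable def φ2 (hkn : k ≤ N + 1) (T : Finset (Fin (N+1))) (hT : T.card = k)
    (hR : (Rset k T).card = d) (ψ : Equiv.Perm (Fin d))
    (hTk : ∀ x ∈ T, k ≤ (x : ℕ)) (hψ : ψ * ψ = 1) : Equiv.Perm (Fin (N+1)) :=
  Function.Involutive.toPerm (f2 hkn T hT hR ψ) (f2_invol hTk hψ)

variable {hkn : k ≤ N + 1} {T : Finset (Fin (N+1))} {hT : T.card = k}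
  {hR : (Rset k T).card = d} {ψ : Equiv.Perm (Fin d)}
  {hTk : ∀ x ∈ T, k ≤ (x : ℕ)} {hψ : ψ * ψ = 1}

lemma φ2_apply (i : Fin (N+1)) : φ2 hkn T hT hR ψ hTk hψ i = f2 hkn T hT hR ψ i := rfl

lemma φ2_mul : φ2 hkn T hT hR ψ hTk hψ * φ2 hkn T hT hR ψ hTk hψ = 1 :=
  (invol_iff _).2 (fun x => f2_invol hTk hψ x)

lemma f2_castLE (j : Fin k) :
    f2 hkn T hT hR ψ (Fin.castLE hkn j) = (T.orderIsoOfFin hT j : Fin (N+1)) := by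
  have h1 : ((Fin.castLE hkn j : Fin (N+1)) : ℕ) < k := j.2
  rw [f2_apply_lt h1]
  have h2 : (⟨((Fin.castLE hkn j : Fin (N+1)) : ℕ), h1⟩ : Fin k) = j := Fin.ext rfl
  rw [h2]

lemma φ2_contains : ContainsIdSeq (φ2 hkn T hT hR ψ hTk hψ) k := by
  rw [contains_iff hkn _ φ2_mul]
  have he : (fun j : Fin k => φ2 hkn T hT hR ψ hTk hψ (Fin.castLE hkn j))
      = fun j : Fin k => (T.orderIsoOfFin hT j : Fin (N+1)) := by
    funext j; rw [φ2_apply, f2_castLE]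
  rw [he]
  intro a b hab
  exact Subtype.coe_lt_coe.2 ((T.orderIsoOfFin hT).strictMono hab)

lemma φ2_zero_ne (hk : 1 ≤ k) : ¬ (φ2 hkn T hT hR ψ hTk hψ 0 = 0) := by
  intro h
  have h1 : ((0 : Fin (N+1)) : ℕ) < k := by simp; omega
  rw [φ2_apply, f2_apply_lt h1] at h
  have := hTk _ ((T.orderIsoOfFin hT) ⟨((0 : Fin (N+1)) : ℕ), h1⟩).2
  rw [h] at this
  simp at this
  omega

lemma f2_image :
    univ.image (fun j : Fin k => f2 hkn T hT hR ψ (Fin.castLE hkn j)) = T := by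
  ext x
  simp only [mem_image, mem_univ, true_and, f2_castLE]
  constructor
  · rintro ⟨j, rfl⟩
    exact ((T.orderIsoOfFin hT) j).2
  · intro hx
    exact ⟨(T.orderIsoOfFin hT).symm ⟨x, hx⟩, by rw [OrderIso.apply_symm_apply]⟩

lemma f2_on_R (a : Fin d) :
    f2 hkn T hT hR ψ (((Rset k T).orderIsoOfFin hR) a : Fin (N+1))
      = (((Rset k T).orderIsoOfFin hR) (ψ a) : Fin (N+1)) := by
  rw [f2_apply_R (((Rset k T).orderIsoOfFin hR) a).2]
  congr 2
  have : (⟨(((Rset k T).orderIsoOfFin hR) a : Fin (N+1)),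
      (((Rset k T).orderIsoOfFin hR) a).2⟩ : {x // x ∈ Rset k T})
      = ((Rset k T).orderIsoOfFin hR) a := Subtype.ext rfl
  rw [this, OrderIso.symm_apply_apply]

end Bij2b

lemma bij2 {N k d : ℕ} (hk : 1 ≤ k) (hN : N + 1 = k + (k + d)) :
    Nat.card {φ : Equiv.Perm (Fin (N+1)) //
        (φ * φ = 1 ∧ ContainsIdSeq φ k) ∧ ¬ φ 0 = 0}
      = Nat.choose (k + d) k * tInv d := by
  classical
  have hkn : k ≤ N + 1 := by omega
  let F : {T : Finset (Fin (N+1)) // T.card = k ∧ ∀ x ∈ T, k ≤ (x : ℕ)} ×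
      {ψ : Equiv.Perm (Fin d) // ψ * ψ = 1} →
      {φ : Equiv.Perm (Fin (N+1)) // (φ * φ = 1 ∧ ContainsIdSeq φ k) ∧ ¬ φ 0 = 0} :=
    fun x =>
      ⟨φ2 hkn x.1.1 x.1.2.1 (Rset_card hN x.1.2.1 x.1.2.2) x.2.1 x.1.2.2 x.2.2,
        ⟨φ2_mul, φ2_contains⟩, φ2_zero_ne hk⟩
  have hinj : Function.Injective F := by
    rintro ⟨⟨Tx, hTx, hTkx⟩, ⟨ψx, hψx⟩⟩ ⟨⟨Ty, hTy, hTky⟩, ⟨ψy, hψy⟩⟩ h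
    have hperm := congrArg Subtype.val h
    simp only [F] at hperm
    have hpt : ∀ i, f2 hkn Tx hTx (Rset_card hN hTx hTkx) ψx i
        = f2 hkn Ty hTy (Rset_card hN hTy hTky) ψy i := by
      intro i
      exact Equiv.ext_iff.1 hperm i
    have hTT : Tx = Ty := by
      rw [← f2_image (hkn := hkn) (hT := hTx) (hR := Rset_card hN hTx hTkx) (ψ := ψx),
          ← f2_image (hkn := hkn) (hT := hTy) (hR := Rset_card hN hTy hTky) (ψ := ψy)]
      exact Finset.image_congr (fun j _ => hpt _)
    subst hTT
    have hψeq : ψx = ψy := by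
      apply Equiv.ext; intro a
      have h1 := hpt (((Rset k Tx).orderIsoOfFin (Rset_card hN hTx hTkx)) a : Fin (N+1))
      rw [f2_on_R, f2_on_R] at h1
      exact ((Rset k Tx).orderIsoOfFin (Rset_card hN hTx hTkx)).injective (Subtype.ext h1)
    subst hψeq
    rfl
  have hsurj : Function.Surjective F := by
    rintro ⟨φ, ⟨hinv, hcon⟩, h0⟩
    have hμ : StrictMono (fun j : Fin k => φ (Fin.castLE hkn j)) :=
      (contains_iff hkn φ hinv).1 hcon
    set μ := fun j : Fin k => φ (Fin.castLE hkn j) with hμdef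
    have key : ∀ i : ℕ, ∀ hi : i < k, k ≤ (μ ⟨i, hi⟩ : ℕ) := by
      intro i
      induction i using Nat.strong_induction_on with
      | _ i IH =>
        intro hi
        by_contra hlt
        push_neg at hlt
        have hback : μ ⟨(μ ⟨i, hi⟩ : ℕ), hlt⟩ = Fin.castLE hkn ⟨i, hi⟩ := by
          have h1 : Fin.castLE hkn ⟨(μ ⟨i, hi⟩ : ℕ), hlt⟩ = μ ⟨i, hi⟩ := Fin.ext rfl
          show φ _ = _
          rw [h1]
          exact invol_apply hinv _
        rcases lt_trichotomy i ((μ ⟨i, hi⟩ : ℕ)) with hcase | hcase | hcase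
        · have h2 := hμ (show (⟨i, hi⟩ : Fin k) < ⟨(μ ⟨i, hi⟩ : ℕ), hlt⟩ from hcase)
          rw [hback] at h2
          rw [Fin.lt_def] at h2
          simp at h2
          omega
        · rcases Nat.eq_zero_or_pos i with rfl | hpos
          · apply h0
            have h2 : μ ⟨0, hi⟩ = φ 0 := by
              have : Fin.castLE hkn ⟨0, hi⟩ = (0 : Fin (N+1)) := Fin.ext rfl
              show φ _ = φ 0
              rw [this]
            apply Fin.ext
            rw [← h2, ← hcase]
            rfl
          · have h1 := IH (i-1) (by omega) (by omega)
            have h2 := hμ (show (⟨i-1, by omega⟩ : Fin k) < ⟨i, hi⟩ from by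
              rw [Fin.lt_def]; simp; omega)
            rw [Fin.lt_def] at h2
            omega
        · have h2 := hμ (show (⟨(μ ⟨i, hi⟩ : ℕ), hlt⟩ : Fin k) < ⟨i, hi⟩ from hcase)
          rw [hback, Fin.lt_def] at h2
          simp at h2
          omega
    have key' : ∀ j : Fin k, k ≤ (μ j : ℕ) := fun j => key j.1 j.2
    set T₀ := univ.image μ with hT₀def
    have hT₀ : T₀.card = k := by
      rw [hT₀def, card_image_of_injective _ hμ.injective, card_univ, Fintype.card_fin]
    have hT₀k : ∀ x ∈ T₀, k ≤ (x : ℕ) := by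
      intro x hx
      rw [hT₀def, mem_image] at hx
      obtain ⟨j, -, rfl⟩ := hx
      exact key' j
    set ρ := (Rset k T₀).orderIsoOfFin (Rset_card hN hT₀ hT₀k) with hρdef
    have hmapsR : ∀ x, x ∈ Rset k T₀ → φ x ∈ Rset k T₀ := by
      intro x hx
      rw [mem_Rset] at hx ⊢
      obtain ⟨hx1, hx2⟩ := hx
      constructor
      · by_contra hlt
        push_neg at hlt
        apply hx2
        rw [hT₀def, mem_image]
        refine ⟨⟨(φ x : ℕ), hlt⟩, mem_univ _, ?_⟩
        have hce : Fin.castLE hkn ⟨(φ x : ℕ), hlt⟩ = φ x := Fin.ext rfl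
        calc μ ⟨(φ x : ℕ), hlt⟩ = φ (Fin.castLE hkn ⟨(φ x : ℕ), hlt⟩) := rfl
          _ = φ (φ x) := by rw [hce]
          _ = x := invol_apply hinv x
      · intro hmem
        rw [hT₀def, mem_image] at hmem
        obtain ⟨j, -, hj⟩ := hmem
        have h2 : φ (μ j) = Fin.castLE hkn j := invol_apply hinv _
        have h3 : Fin.castLE hkn j = x := by
          rw [← h2, hj]
          exact invol_apply hinv x
        have hxval : (x : ℕ) < k := by
          rw [← h3]
          simpa using j.2
        omega
    let g : Fin d → Fin d := fun a => ρ.symm ⟨φ (ρ a : Fin (N+1)), hmapsR _ (ρ a).2⟩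
    have e1 : ∀ x, ρ (g x) = ⟨φ (ρ x : Fin (N+1)), hmapsR _ (ρ x).2⟩ :=
      fun x => OrderIso.apply_symm_apply _ _
    have hg : Function.Involutive g := by
      intro a
      apply ρ.injective
      rw [e1, e1]
      apply Subtype.ext
      show φ (φ (ρ a : Fin (N+1))) = (ρ a : Fin (N+1))
      exact invol_apply hinv _
    have hψ₀ : Function.Involutive.toPerm g hg * Function.Involutive.toPerm g hg = 1 :=
      (invol_iff _).2 hg
    refine ⟨⟨⟨T₀, hT₀, hT₀k⟩, ⟨Function.Involutive.toPerm g hg, hψ₀⟩⟩, ?_⟩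
    apply Subtype.ext
    apply Equiv.ext
    intro i
    show f2 hkn T₀ hT₀ (Rset_card hN hT₀ hT₀k) (Function.Involutive.toPerm g hg) i = φ i
    have hμmem : ∀ x : Fin k, μ x ∈ T₀ := by
      intro x; rw [hT₀def]; exact mem_image_of_mem _ (mem_univ x)
    have huniq : μ = ⇑(T₀.orderEmbOfFin hT₀) := orderEmbOfFin_unique hT₀ hμmem hμ
    have hτ : ∀ j : Fin k, (T₀.orderIsoOfFin hT₀ j : Fin (N+1)) = μ j := by
      intro j
      rw [coe_orderIsoOfFin_apply, huniq]
    by_cases h1 : (i : ℕ) < k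
    · rw [f2_apply_lt h1, hτ]
      have hce : Fin.castLE hkn ⟨(i : ℕ), h1⟩ = i := Fin.ext rfl
      calc μ ⟨(i : ℕ), h1⟩ = φ (Fin.castLE hkn ⟨(i : ℕ), h1⟩) := rfl
        _ = φ i := by rw [hce]
    · by_cases h2 : i ∈ T₀
      · rw [f2_apply_mem h1 h2]
        obtain ⟨j, -, hj⟩ := mem_image.1 (hT₀def ▸ h2)
        have hτj : (T₀.orderIsoOfFin hT₀).symm ⟨i, h2⟩ = j := by
          rw [show (⟨i, h2⟩ : {x // x ∈ T₀}) = (T₀.orderIsoOfFin hT₀) j from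
            Subtype.ext (by rw [hτ]; exact hj.symm)]
          exact OrderIso.symm_apply_apply _ _
        rw [hτj, ← hj]
        exact (invol_apply hinv _).symm
      · have h3 : i ∈ Rset k T₀ := mem_Rset.2 ⟨Nat.le_of_not_lt h1, h2⟩
        rw [f2_apply_R h3]
        show ((ρ ((Function.Involutive.toPerm g hg) (ρ.symm ⟨i, h3⟩))) : Fin (N+1)) = φ i
        have : (Function.Involutive.toPerm g hg) (ρ.symm ⟨i, h3⟩) = g (ρ.symm ⟨i, h3⟩) := rfl
        rw [this, e1, OrderIso.apply_symm_apply]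
  have hcard := Nat.card_eq_of_bijective F ⟨hinj, hsurj⟩
  rw [← hcard, Nat.card_prod]
  congr 1
  · have e := Equiv.subtypeEquivRight
      (p := fun T : Finset (Fin (N+1)) => T.card = k ∧ ∀ x ∈ T, k ≤ (x : ℕ))
      (q := fun T => T ∈ powersetCard k (univ.filter (fun x : Fin (N+1) => k ≤ (x : ℕ))))
      (by
        intro T
        simp only [mem_powersetCard]
        constructor
        · rintro ⟨ha, hb⟩
          exact ⟨fun x hx => mem_filter.2 ⟨mem_univ _, hb x hx⟩, ha⟩
        · rintro ⟨ha, hb⟩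
          exact ⟨hb, fun x hx => (mem_filter.1 (ha hx)).2⟩)
    rw [Nat.card_congr e, Nat.card_eq_fintype_card, Fintype.card_coe,
      card_powersetCard, card_filter_ge hN]


/-- For `k ≥ 1` and `n ≥ 2k`,
`G(n,k) = G(n−1,k−1) + C(n−k,k)·t_{n−2k}`. -/
theorem G_recurrence (n k : ℕ) (hk : 1 ≤ k) (hn : 2 * k ≤ n) :
    G n k = G (n - 1) (k - 1) + Nat.choose (n - k) k * tInv (n - 2 * k) := by
  obtain ⟨l, rfl⟩ : ∃ l, k = l + 1 := ⟨k - 1, by omega⟩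
  obtain ⟨d, rfl⟩ : ∃ d, n = 2 * l + 1 + d + 1 := ⟨n - (2 * l + 2), by omega⟩
  rw [show 2 * l + 1 + d + 1 - 1 = 2 * l + 1 + d from by omega,
      show l + 1 - 1 = l from by omega,
      show 2 * l + 1 + d + 1 - (l + 1) = l + 1 + d from by omega,
      show 2 * l + 1 + d + 1 - 2 * (l + 1) = d from by omega]
  have hsplit := card_split (α := Equiv.Perm (Fin (2 * l + 1 + d + 1)))
    (fun φ => φ * φ = 1 ∧ ContainsIdSeq φ (l + 1)) (fun φ => φ 0 = 0)
  show Nat.card {φ : Equiv.Perm (Fin (2 * l + 1 + d + 1)) //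
      φ * φ = 1 ∧ ContainsIdSeq φ (l + 1)} = _
  rw [hsplit]
  congr 1
  · exact bij1 (by omega)
  · exact bij2 (by omega) (by omega)
end

section
/- For integers 0 ≤ k with n ≥ 2k, G(n,k) = Σ_{j=0}^{k} C(n−k, j)·t_{n−k−j}; that is, the number of involutions of [n] containing the subsequence 1 2 ⋯ k equals Σ_{j=0}^{k} C(n−k,j)·t_{n−k−j}. -/
/- ### Auxiliary machinery -/

/-- involution count only depends on the cardinality -/
lemma tInv_card (α : Type*) [Fintype α] [DecidableEq α] :
    Nat.card {φ : Equiv.Perm α // φ * φ = 1} = tInv (Fintype.card α) := by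
  classical
  refine Nat.card_congr ?_
  refine Equiv.subtypeEquiv ((Fintype.equivFin α).permCongr) (fun φ => ?_)
  constructor
  · intro h
    ext x
    simp [Equiv.permCongr_apply, Equiv.Perm.mul_apply,
      show φ (φ ((Fintype.equivFin α).symm x)) = (Fintype.equivFin α).symm x from by
        have := congrArg (fun ψ => ψ ((Fintype.equivFin α).symm x)) h
        simpa [Equiv.Perm.mul_apply] using this]
  · intro h
    ext x
    have := congrArg (fun ψ => ψ ((Fintype.equivFin α) x)) h
    simpa [Equiv.permCongr_apply, Equiv.Perm.mul_apply] using this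

/-- cardinality of a value-interval inside `Fin n` -/
lemma card_filter_interval (n a b : ℕ) (hb : b ≤ n) :
    (Finset.univ.filter fun y : Fin n => a ≤ y.val ∧ y.val < b).card = b - a := by
  classical
  rw [show b - a = (Finset.Ico a b).card from (Nat.card_Ico a b).symm]
  apply Finset.card_bij (fun y _ => y.val)
  · intro y hy
    simp only [Finset.mem_filter] at hy
    simp [Finset.mem_Ico, hy.2.1, hy.2.2]
  · intro y hy y' hy' h
    exact Fin.ext h
  · intro c hc
    simp only [Finset.mem_Ico] at hc
    exact ⟨⟨c, lt_of_lt_of_le hc.2 hb⟩, by simp [hc.1, hc.2], rfl⟩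

/-- the "big letters" `k ≤ x` of `Fin n` -/
abbrev Bk (n k : ℕ) := {x : Fin n // k ≤ x.val}

lemma card_Bk (n k : ℕ) (hkn : k ≤ n) : Fintype.card (Bk n k) = n - k := by
  classical
  rw [Fintype.card_subtype]
  have := card_filter_interval n k n le_rfl
  rw [← this]
  congr 1
  apply Finset.filter_congr
  intro x _
  simp [x.isLt]

/-- the data in the bijection: a set `T` of big letters (partners of the top of `[k]`)
together with an involution of the remaining big letters. -/
abbrev Pairs (n k : ℕ) : Type :=
  Σ T : {T : Finset (Bk n k) // T.card ≤ k},
    {ψ : Equiv.Perm {b : Bk n k // b ∉ T.1} // ψ * ψ = 1}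

section Build

variable {n k : ℕ}

/-- the underlying function of the involution built from `(T, ψ)`. -/
def buildF (hkn : k ≤ n) (T : Finset (Bk n k)) (hT : T.card ≤ k)
    (ψ : Equiv.Perm {b : Bk n k // b ∉ T}) : Fin n → Fin n := fun x =>
  if hx : x.val < k then
    if hx2 : x.val < k - T.card then x
    else
      ((T.orderIsoOfFin rfl ⟨x.val - (k - T.card), by omega⟩ : Bk n k) : Fin n)
  else
    if hb : (⟨x, le_of_not_gt hx⟩ : Bk n k) ∈ T then
      ⟨k - T.card + ((T.orderIsoOfFin rfl).symm ⟨_, hb⟩ : Fin T.card).val, by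
        have := ((T.orderIsoOfFin rfl).symm ⟨_, hb⟩ : Fin T.card).isLt; omega⟩
    else ((ψ ⟨⟨x, le_of_not_gt hx⟩, hb⟩ : {b : Bk n k // b ∉ T}) : Bk n k)

variable (hkn : k ≤ n) (T : Finset (Bk n k)) (hT : T.card ≤ k)
    (ψ : Equiv.Perm {b : Bk n k // b ∉ T}) (hψ : ψ * ψ = 1)

lemma buildF_small1 (x : Fin n) (hx : x.val < k - T.card) :
    buildF hkn T hT ψ x = x := by
  have hx' : x.val < k := by omega
  simp [buildF, hx, hx']

lemma buildF_small2 (x : Fin n) (hx : x.val < k) (hx2 : ¬ x.val < k - T.card) :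
    buildF hkn T hT ψ x =
      ((T.orderIsoOfFin rfl ⟨x.val - (k - T.card), by omega⟩ : Bk n k) : Fin n) := by
  simp [buildF, hx, hx2]

lemma buildF_big_mem (b : Bk n k) (hb : b ∈ T) :
    buildF hkn T hT ψ b.1 =
      ⟨k - T.card + ((T.orderIsoOfFin rfl).symm ⟨b, hb⟩ : Fin T.card).val, by
        have := ((T.orderIsoOfFin rfl).symm ⟨b, hb⟩ : Fin T.card).isLt; omega⟩ := by
  have hx : ¬ (b.1.val < k) := not_lt.mpr b.2
  simp only [buildF, dif_neg hx]
  rw [dif_pos (show (⟨b.1, le_of_not_gt hx⟩ : Bk n k) ∈ T from hb)]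

lemma buildF_big_notmem (b : Bk n k) (hb : b ∉ T) :
    buildF hkn T hT ψ b.1 = ((ψ ⟨b, hb⟩ : {b : Bk n k // b ∉ T}) : Bk n k) := by
  have hx : ¬ (b.1.val < k) := not_lt.mpr b.2
  simp only [buildF, dif_neg hx]
  rw [dif_neg (show ¬ ((⟨b.1, le_of_not_gt hx⟩ : Bk n k) ∈ T) from hb)]

include hψ in
lemma buildF_involutive : Function.Involutive (buildF hkn T hT ψ) := by
  intro x
  by_cases hx : x.val < k
  · by_cases hx2 : x.val < k - T.card
    · rw [buildF_small1 hkn T hT ψ x hx2, buildF_small1 hkn T hT ψ x hx2]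
    · rw [buildF_small2 hkn T hT ψ x hx hx2]
      have hi : x.val - (k - T.card) < T.card := by omega
      have hbmem : ((T.orderIsoOfFin rfl ⟨x.val - (k - T.card), hi⟩ : Bk n k)) ∈ T :=
        (T.orderIsoOfFin rfl ⟨x.val - (k - T.card), hi⟩).2
      rw [buildF_big_mem hkn T hT ψ _ hbmem]
      have hsymm : ((T.orderIsoOfFin rfl).symm
          ⟨(T.orderIsoOfFin rfl ⟨x.val - (k - T.card), hi⟩ : Bk n k), hbmem⟩).val
          = x.val - (k - T.card) := by
        have := (T.orderIsoOfFin rfl).symm_apply_apply ⟨x.val - (k - T.card), hi⟩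
        exact congrArg Fin.val this
      apply Fin.ext
      simp only [hsymm]
      omega
  · by_cases hb : (⟨x, le_of_not_gt hx⟩ : Bk n k) ∈ T
    · rw [show x = (⟨x, le_of_not_gt hx⟩ : Bk n k).1 from rfl,
        buildF_big_mem hkn T hT ψ _ hb]
      have hidxlt := ((T.orderIsoOfFin rfl).symm ⟨⟨x, le_of_not_gt hx⟩, hb⟩).isLt
      have hT0 : 0 < T.card := Finset.card_pos.mpr ⟨_, hb⟩
      have hlt : k - T.card + ((T.orderIsoOfFin rfl).symm
          ⟨⟨x, le_of_not_gt hx⟩, hb⟩).val < k := by omega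
      have hge : ¬ (k - T.card + ((T.orderIsoOfFin rfl).symm
          ⟨⟨x, le_of_not_gt hx⟩, hb⟩).val < k - T.card) := by omega
      rw [buildF_small2 hkn T hT ψ _ hlt hge]
      have hidx : (⟨(k - T.card + ((T.orderIsoOfFin rfl).symm
            ⟨⟨x, le_of_not_gt hx⟩, hb⟩).val) - (k - T.card), by omega⟩ : Fin T.card)
          = (T.orderIsoOfFin rfl).symm ⟨⟨x, le_of_not_gt hx⟩, hb⟩ := by
        apply Fin.ext
        simp only
        omega
      rw [hidx, (T.orderIsoOfFin rfl).apply_symm_apply]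
    · rw [show x = (⟨x, le_of_not_gt hx⟩ : Bk n k).1 from rfl,
        buildF_big_notmem hkn T hT ψ _ hb]
      rw [show (((ψ ⟨⟨x, le_of_not_gt hx⟩, hb⟩ : {b : Bk n k // b ∉ T}) : Bk n k) : Fin n)
          = (ψ ⟨⟨x, le_of_not_gt hx⟩, hb⟩).1.1 from rfl,
        buildF_big_notmem hkn T hT ψ _ (ψ ⟨⟨x, le_of_not_gt hx⟩, hb⟩).2]
      have : ψ ⟨(ψ ⟨⟨x, le_of_not_gt hx⟩, hb⟩).1, (ψ ⟨⟨x, le_of_not_gt hx⟩, hb⟩).2⟩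
          = ⟨⟨x, le_of_not_gt hx⟩, hb⟩ := by
        rw [show (⟨(ψ ⟨⟨x, le_of_not_gt hx⟩, hb⟩).1, (ψ ⟨⟨x, le_of_not_gt hx⟩, hb⟩).2⟩
            : {b : Bk n k // b ∉ T}) = ψ ⟨⟨x, le_of_not_gt hx⟩, hb⟩ from rfl,
          ← Equiv.Perm.mul_apply, hψ, Equiv.Perm.one_apply]
      rw [this]

/-- the involution built from `(T, ψ)`. -/
def buildPerm : Equiv.Perm (Fin n) :=
  (buildF_involutive hkn T hT ψ hψ).toPerm _

lemma buildPerm_apply (x : Fin n) : buildPerm hkn T hT ψ hψ x = buildF hkn T hT ψ x := rfl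

lemma buildPerm_mul_self : buildPerm hkn T hT ψ hψ * buildPerm hkn T hT ψ hψ = 1 :=
  Equiv.Perm.ext fun x => by
    rw [Equiv.Perm.mul_apply, Equiv.Perm.one_apply]
    exact buildF_involutive hkn T hT ψ hψ x

lemma buildF_small2_ge (x : Fin n) (hx : x.val < k) (hx2 : ¬ x.val < k - T.card) :
    k ≤ (buildF hkn T hT ψ x).val := by
  rw [buildF_small2 hkn T hT ψ x hx hx2]
  exact (T.orderIsoOfFin rfl ⟨x.val - (k - T.card), by omega⟩).1.2

lemma buildF_small2_mono (x y : Fin n) (hx : x.val < k) (hx2 : ¬ x.val < k - T.card)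
    (hy : y.val < k) (hy2 : ¬ y.val < k - T.card) (hxy : x < y) :
    buildF hkn T hT ψ x < buildF hkn T hT ψ y := by
  rw [buildF_small2 hkn T hT ψ x hx hx2, buildF_small2 hkn T hT ψ y hy hy2]
  have hxy' : x.val < y.val := hxy
  have hmono : (⟨x.val - (k - T.card), by omega⟩ : Fin T.card)
      < ⟨y.val - (k - T.card), by omega⟩ := by
    rw [Fin.lt_def]; simp only; omega
  have h3 := (T.orderIsoOfFin rfl).strictMono hmono
  exact Subtype.coe_lt_coe.mpr (Subtype.coe_lt_coe.mpr h3)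

lemma buildPerm_containsIdSeq : ContainsIdSeq (buildPerm hkn T hT ψ hψ) k := by
  refine ⟨fun i => buildPerm hkn T hT ψ hψ ⟨i.val, lt_of_lt_of_le i.isLt hkn⟩, ?_, ?_⟩
  · intro i i' hii'
    have hi : (i : ℕ) < k := i.isLt
    have hi' : (i' : ℕ) < k := i'.isLt
    simp only [buildPerm_apply]
    by_cases h2 : (i' : ℕ) < k - T.card
    · have h1 : (i : ℕ) < k - T.card := lt_trans hii' h2
      rw [buildF_small1 hkn T hT ψ _ (show ((⟨(i : ℕ), lt_of_lt_of_le i.isLt hkn⟩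
            : Fin n) : ℕ) < k - T.card from h1),
        buildF_small1 hkn T hT ψ _ (show ((⟨(i' : ℕ), lt_of_lt_of_le i'.isLt hkn⟩
            : Fin n) : ℕ) < k - T.card from h2)]
      exact Fin.mk_lt_mk.mpr hii'
    · by_cases h1 : (i : ℕ) < k - T.card
      · have hge := buildF_small2_ge hkn T hT ψ (⟨(i' : ℕ), lt_of_lt_of_le i'.isLt hkn⟩
          : Fin n) (show _ from hi') (show _ from h2)
        rw [buildF_small1 hkn T hT ψ _ (show ((⟨(i : ℕ), lt_of_lt_of_le i.isLt hkn⟩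
            : Fin n) : ℕ) < k - T.card from h1)]
        exact Fin.lt_def.mpr (by simp only at hge ⊢; omega)
      · exact buildF_small2_mono hkn T hT ψ _ _ (show _ from hi) (show _ from h1)
          (show _ from hi') (show _ from h2) (Fin.mk_lt_mk.mpr hii')
  · intro i
    exact congrArg Fin.val
      (buildF_involutive hkn T hT ψ hψ ⟨i.val, lt_of_lt_of_le i.isLt hkn⟩)

lemma buildPerm_big_iff (b : Bk n k) :
    b ∈ T ↔ (buildPerm hkn T hT ψ hψ b.1).val < k := by
  constructor
  · intro hb
    rw [buildPerm_apply, buildF_big_mem hkn T hT ψ b hb]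
    have := ((T.orderIsoOfFin rfl).symm ⟨b, hb⟩ : Fin T.card).isLt
    simp only
    omega
  · intro h
    by_contra hb
    rw [buildPerm_apply, buildF_big_notmem hkn T hT ψ b hb] at h
    exact absurd h (not_lt.mpr (ψ ⟨b, hb⟩).1.2)

end Build

section BijDef

variable {n k : ℕ}

/-- the bijection from `Pairs n k` to involutions containing `1 ⋯ k`. -/
def FMap (hkn : k ≤ n) : Pairs n k →
    {φ : Equiv.Perm (Fin n) // φ * φ = 1 ∧ ContainsIdSeq φ k} :=
  fun p => ⟨buildPerm hkn p.1.1 p.1.2 p.2.1 p.2.2,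
    buildPerm_mul_self hkn p.1.1 p.1.2 p.2.1 p.2.2,
    buildPerm_containsIdSeq hkn p.1.1 p.1.2 p.2.1 p.2.2⟩

lemma FMap_bijective (hkn : k ≤ n) : Function.Bijective (FMap (n := n) (k := k) hkn) := by
  constructor
  · -- injectivity
    rintro ⟨⟨T, hT⟩, ψ, hψ⟩ ⟨⟨T', hT'⟩, ψ', hψ'⟩ h
    have hperm : buildPerm hkn T hT ψ hψ = buildPerm hkn T' hT' ψ' hψ' :=
      congrArg Subtype.val h
    have hTT : T = T' := by
      ext b
      rw [buildPerm_big_iff hkn T hT ψ hψ b, buildPerm_big_iff hkn T' hT' ψ' hψ' b, hperm]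
    subst hTT
    have hψψ : ψ = ψ' := by
      refine Equiv.Perm.ext fun c => Subtype.ext (Subtype.ext ?_)
      have h1 := buildF_big_notmem hkn T hT ψ c.1 c.2
      have h2 := buildF_big_notmem hkn T hT ψ' c.1 c.2
      have h3 : buildF hkn T hT ψ c.1.1 = buildF hkn T hT ψ' c.1.1 := by
        rw [show buildF hkn T hT ψ c.1.1 = buildPerm hkn T hT ψ hψ c.1.1 from rfl,
          show buildF hkn T hT ψ' c.1.1 = buildPerm hkn T hT ψ' hψ' c.1.1 from rfl, hperm]
      rw [h1, h2] at h3
      exact h3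
    subst hψψ
    rfl
  · -- surjectivity
    rintro ⟨φ, hφ1, hφ2⟩
    classical
    have hinv : ∀ x, φ (φ x) = x := fun x => by
      have := congrArg (fun ψ : Equiv.Perm (Fin n) => ψ x) hφ1
      simpa [Equiv.Perm.mul_apply] using this
    obtain ⟨g, hg, hgφ⟩ := hφ2
    have hkn' : ∀ i : Fin k, (i : ℕ) < n := fun i => lt_of_lt_of_le i.isLt hkn
    have hgval : ∀ i : Fin k, g i = φ ⟨i.val, hkn' i⟩ := by
      intro i
      have h1 : φ (g i) = ⟨i.val, hkn' i⟩ := Fin.ext (hgφ i)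
      calc g i = φ (φ (g i)) := (hinv _).symm
        _ = φ ⟨i.val, hkn' i⟩ := by rw [h1]
    have hmono : ∀ x y : Fin n, x.val < k → y.val < k → x < y → φ x < φ y := by
      intro x y hx hy hxy
      have hgx : g ⟨x.val, hx⟩ = φ x := hgval ⟨x.val, hx⟩
      have hgy : g ⟨y.val, hy⟩ = φ y := hgval ⟨y.val, hy⟩
      rw [← hgx, ← hgy]
      exact hg (show (⟨x.val, hx⟩ : Fin k) < ⟨y.val, hy⟩ from Fin.mk_lt_mk.mpr hxy)
    have hsmall : ∀ x : Fin n, x.val < k → φ x = x ∨ k ≤ (φ x).val := by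
      intro x hx
      by_contra h
      push_neg at h
      obtain ⟨hne, hlt⟩ := h
      rcases lt_trichotomy x (φ x) with h1 | h1 | h1
      · have h2 := hmono x (φ x) hx hlt h1
        rw [hinv] at h2
        exact absurd (lt_trans h1 h2) (lt_irrefl x)
      · exact hne h1.symm
      · have h2 := hmono (φ x) x hlt hx h1
        rw [hinv] at h2
        exact absurd (lt_trans h2 h1) (lt_irrefl x)
    set D : Finset (Fin n) :=
      Finset.univ.filter (fun x : Fin n => x.val < k ∧ φ x ≠ x) with hDdef
    set T : Finset (Bk n k) :=
      Finset.univ.filter (fun b : Bk n k => (φ b.1).val < k) with hTdef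
    have hDmem : ∀ x : Fin n, x ∈ D ↔ x.val < k ∧ φ x ≠ x := by
      intro x; rw [hDdef]; simp [Finset.mem_filter]
    have hTmem : ∀ b : Bk n k, b ∈ T ↔ (φ b.1).val < k := by
      intro b; rw [hTdef]; simp [Finset.mem_filter]
    have hDk : ∀ x ∈ D, k ≤ (φ x).val := by
      intro x hx
      obtain ⟨h1, h2⟩ := (hDmem x).mp hx
      rcases hsmall x h1 with h | h
      · exact absurd h h2
      · exact h
    have hup : ∀ x y : Fin n, x ∈ D → x.val ≤ y.val → y.val < k → y ∈ D := by
      intro x y hxD hxy hyk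
      rcases eq_or_lt_of_le hxy with heq | hlt
      · rwa [show y = x from Fin.ext heq.symm]
      · have h1 := hmono x y ((hDmem x).mp hxD).1 hyk (Fin.lt_def.mpr hlt)
        have h2 := hDk x hxD
        refine (hDmem y).mpr ⟨hyk, fun hc => ?_⟩
        rw [hc] at h1
        have h3 : (φ x).val < (y : ℕ) := h1
        omega
    have hcard : D.card = T.card := by
      apply Finset.card_bij (fun x _hx => (⟨φ x, hDk x _hx⟩ : Bk n k))
      · intro a ha
        rw [hTmem]
        show (φ (φ a)).val < k
        rw [hinv]
        exact ((hDmem a).mp ha).1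
      · intro a₁ ha₁ a₂ ha₂ h
        exact φ.injective (congrArg Subtype.val h)
      · intro b hb
        have hb1 : (φ b.1).val < k := (hTmem b).mp hb
        have hbk : k ≤ b.1.val := b.2
        have haD : φ b.1 ∈ D := by
          refine (hDmem _).mpr ⟨hb1, fun hc => ?_⟩
          rw [hinv] at hc
          have := congrArg Fin.val hc
          omega
        exact ⟨φ b.1, haD, Subtype.ext (hinv b.1)⟩
    have hjk : T.card ≤ k := by
      have hsub : D ⊆ Finset.univ.filter (fun y : Fin n => 0 ≤ y.val ∧ y.val < k) := by
        intro y hy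
        simp only [Finset.mem_filter, Finset.mem_univ, true_and]
        exact ⟨Nat.zero_le _, ((hDmem y).mp hy).1⟩
      have h1 := Finset.card_le_card hsub
      rw [card_filter_interval n 0 k hkn] at h1
      omega
    have hfix : ∀ x : Fin n, x.val < k → (φ x = x ↔ x.val < k - T.card) := by
      intro x hx
      constructor
      · intro hfx
        by_contra hge
        push_neg at hge
        have hsub : D ⊆ Finset.univ.filter
            (fun y : Fin n => x.val + 1 ≤ y.val ∧ y.val < k) := by
          intro y hyD
          simp only [Finset.mem_filter, Finset.mem_univ, true_and]
          have hy := (hDmem y).mp hyD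
          refine ⟨?_, hy.1⟩
          by_contra hyx
          push_neg at hyx
          exact ((hDmem x).mp (hup y x hyD (by omega) hx)).2 hfx
        have h1 := Finset.card_le_card hsub
        rw [card_filter_interval n (x.val + 1) k hkn] at h1
        omega
      · intro hlt
        by_contra hne
        have hxD : x ∈ D := (hDmem x).mpr ⟨hx, hne⟩
        have hsub : Finset.univ.filter
            (fun y : Fin n => x.val ≤ y.val ∧ y.val < k) ⊆ D := by
          intro y hy
          simp only [Finset.mem_filter, Finset.mem_univ, true_and] at hy
          exact hup x y hxD hy.1 hy.2
        have h1 := Finset.card_le_card hsub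
        rw [card_filter_interval n x.val k hkn] at h1
        omega
    -- the order-embedding description of `φ` on the top part of `[k]`
    have hidx : ∀ i : Fin T.card, k - T.card + (i : ℕ) < n := by
      intro i; have := i.isLt; omega
    have hvk : ∀ i : Fin T.card, k - T.card + (i : ℕ) < k := by
      intro i; have := i.isLt; omega
    have hphi_ge : ∀ i : Fin T.card, k ≤ (φ ⟨k - T.card + (i : ℕ), hidx i⟩).val := by
      intro i
      rcases hsmall ⟨k - T.card + (i : ℕ), hidx i⟩ (hvk i) with h | h
      · exfalso
        have := (hfix _ (hvk i)).mp h
        simp only at this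
        omega
      · exact h
    have hfmem : ∀ i : Fin T.card,
        (⟨φ ⟨k - T.card + (i : ℕ), hidx i⟩, hphi_ge i⟩ : Bk n k) ∈ T := by
      intro i
      rw [hTmem]
      show (φ (φ _)).val < k
      rw [hinv]
      exact hvk i
    have hfmono : StrictMono (fun i : Fin T.card =>
        (⟨φ ⟨k - T.card + (i : ℕ), hidx i⟩, hphi_ge i⟩ : Bk n k)) := by
      intro i i' hii'
      have hii2 : (i : ℕ) < (i' : ℕ) := hii'
      show (⟨φ ⟨k - T.card + (i : ℕ), hidx i⟩, hphi_ge i⟩ : Bk n k)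
        < ⟨φ ⟨k - T.card + (i' : ℕ), hidx i'⟩, hphi_ge i'⟩
      rw [Subtype.mk_lt_mk]
      exact hmono _ _ (hvk i) (hvk i') (Fin.mk_lt_mk.mpr (by omega))
    have hf : (fun i : Fin T.card =>
        (⟨φ ⟨k - T.card + (i : ℕ), hidx i⟩, hphi_ge i⟩ : Bk n k))
        = ⇑(T.orderEmbOfFin rfl) :=
      Finset.orderEmbOfFin_unique rfl (fun i => hfmem i) hfmono
    have hf' : ∀ i : Fin T.card,
        (⟨φ ⟨k - T.card + (i : ℕ), hidx i⟩, hphi_ge i⟩ : Bk n k)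
          = T.orderEmbOfFin rfl i := fun i => congrFun hf i
    have hiso : ∀ i : Fin T.card, ((T.orderIsoOfFin rfl i : Bk n k) : Fin n)
        = φ ⟨k - T.card + (i : ℕ), hidx i⟩ := by
      intro i
      rw [Finset.coe_orderIsoOfFin_apply, ← hf' i]
    -- the restriction of `φ` to the big letters outside `T`
    have hpsi1 : ∀ c : {b : Bk n k // b ∉ T}, k ≤ (φ c.1.1).val := by
      intro c
      have := c.2
      rw [hTmem] at this
      omega
    have hpsi2 : ∀ c : {b : Bk n k // b ∉ T},
        (⟨φ c.1.1, hpsi1 c⟩ : Bk n k) ∉ T := by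
      intro c
      rw [hTmem]
      show ¬ (φ (φ c.1.1)).val < k
      rw [hinv]
      exact not_lt.mpr c.1.2
    have hψinv : Function.Involutive (fun c : {b : Bk n k // b ∉ T} =>
        (⟨⟨φ c.1.1, hpsi1 c⟩, hpsi2 c⟩ : {b : Bk n k // b ∉ T})) :=
      fun c => Subtype.ext (Subtype.ext (hinv c.1.1))
    have hψ9 : Function.Involutive.toPerm _ hψinv * Function.Involutive.toPerm _ hψinv
        = 1 := Equiv.Perm.ext fun c => by
      rw [Equiv.Perm.mul_apply, Equiv.Perm.one_apply]
      exact hψinv c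
    refine ⟨⟨⟨T, hjk⟩, ⟨Function.Involutive.toPerm _ hψinv, hψ9⟩⟩, ?_⟩
    apply Subtype.ext
    refine Equiv.Perm.ext fun x => ?_
    show buildF hkn T hjk (Function.Involutive.toPerm _ hψinv) x = φ x
    by_cases hx : x.val < k
    · by_cases hx2 : x.val < k - T.card
      · rw [buildF_small1 hkn T hjk _ x hx2]
        exact ((hfix x hx).mpr hx2).symm
      · rw [buildF_small2 hkn T hjk _ x hx hx2, hiso]
        congr 1
        apply Fin.ext
        show k - T.card + (x.val - (k - T.card)) = x.val
        omega
    · by_cases hb : (⟨x, le_of_not_gt hx⟩ : Bk n k) ∈ T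
      · rw [show x = (⟨x, le_of_not_gt hx⟩ : Bk n k).1 from rfl,
          buildF_big_mem hkn T hjk _ _ hb]
        set i := (T.orderIsoOfFin rfl).symm ⟨⟨x, le_of_not_gt hx⟩, hb⟩ with hidef
        have h2 : (T.orderIsoOfFin rfl) i = ⟨⟨x, le_of_not_gt hx⟩, hb⟩ :=
          (T.orderIsoOfFin rfl).apply_symm_apply _
        have h3 : ((T.orderEmbOfFin rfl i : Bk n k) : Fin n) = x := by
          rw [← Finset.coe_orderIsoOfFin_apply, h2]
        have h4 : φ ⟨k - T.card + (i : ℕ), hidx i⟩ = x :=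
          (congrArg (fun b : Bk n k => b.1) (hf' i)).trans h3
        have h5 : φ ((⟨x, le_of_not_gt hx⟩ : Bk n k) : Fin n)
            = ⟨k - T.card + (i : ℕ), hidx i⟩ := by
          show φ x = _
          rw [← h4, hinv]
        rw [h5]
      · rw [show x = (⟨x, le_of_not_gt hx⟩ : Bk n k).1 from rfl,
          buildF_big_notmem hkn T hjk _ _ hb]
        rfl

end BijDef

/-- For `0 ≤ k` with `n ≥ 2k`,
`G(n,k) = Σ_{j=0}^{k} C(n−k,j)·t_{n−k−j}`. -/
theorem G_explicit (n k : ℕ) (hn : 2 * k ≤ n) :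
    G n k = ∑ j ∈ Finset.range (k + 1), Nat.choose (n - k) j * tInv (n - k - j) := by
  classical
  have hkn : k ≤ n := by omega
  rw [G, ← Nat.card_eq_of_bijective _ (FMap_bijective hkn)]
  -- now compute the cardinality of `Pairs n k`
  have hcompl : ∀ T : Finset (Bk n k),
      Nat.card {ψ : Equiv.Perm {b : Bk n k // b ∉ T} // ψ * ψ = 1}
        = tInv (n - k - T.card) := by
    intro T
    rw [tInv_card]
    congr 1
    rw [Fintype.card_subtype_compl, card_Bk n k hkn]
    congr 1
    rw [Fintype.card_coe]
  rw [Nat.card_eq_fintype_card, Fintype.card_sigma]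
  have hterm : ∀ T : {T : Finset (Bk n k) // T.card ≤ k},
      Fintype.card {ψ : Equiv.Perm {b : Bk n k // b ∉ T.1} // ψ * ψ = 1}
        = tInv (n - k - T.1.card) := by
    intro T
    rw [← Nat.card_eq_fintype_card]
    exact hcompl T.1
  rw [Finset.sum_congr rfl (fun T _ => hterm T)]
  -- turn the subtype sum into a filtered finset sum
  rw [← Finset.sum_subtype (Finset.univ.filter fun T : Finset (Bk n k) => T.card ≤ k)
    (by intro T; simp) (fun T => tInv (n - k - T.card))]
  rw [← Finset.sum_fiberwise_of_maps_to (g := Finset.card) (t := Finset.range (k + 1))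
    (by intro T hT; simp only [Finset.mem_filter] at hT; simp [Nat.lt_succ_iff, hT.2])
    (fun T => tInv (n - k - T.card))]
  apply Finset.sum_congr rfl
  intro j hj
  simp only [Finset.mem_range, Nat.lt_succ_iff] at hj
  have hfilter : ((Finset.univ.filter fun T : Finset (Bk n k) => T.card ≤ k).filter
      fun T => T.card = j) = Finset.powersetCard j Finset.univ := by
    ext T
    simp only [Finset.mem_filter, Finset.mem_univ, true_and,
      Finset.mem_powersetCard_univ]
    constructor
    · rintro ⟨-, h⟩; exact h
    · intro h; exact ⟨by omega, h⟩
  rw [hfilter]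
  rw [Finset.sum_congr rfl (fun T hT => by
    rw [Finset.mem_powersetCard_univ.mp hT])]
  rw [Finset.sum_const, Finset.card_powersetCard, Finset.card_univ, card_Bk n k hkn,
    smul_eq_mul]
end
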